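/- arXiv:math/0703470 — 10 statements merged into one kernel-verified Lean document; each statement's English description precedes it below -/
import Mathlib

section
/- Every term of the Somos-4 sequence is an integer: if a_0 = a_1 = a_2 = a_3 = 1 and a_{n+4} = (a_{n+1} a_{n+3} + a_{n+2}^2) / a_n for all n ≥ 0, then a_n is a (positive) integer for every n ≥ 0. -/
/-- Every term of the Somos-4 sequence is a positive integer. -/
theorem somos4_integral (a : ℕ → ℚ)
    (h0 : a 0 = 1) (h1 : a 1 = 1) (h2 : a 2 = 1) (h3 : a 3 = 1)
    (hrec : ∀ n, a (n + 4) = (a (n + 1) * a (n + 3) + a (n + 2) ^ 2) / a n) :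
    ∀ n, ∃ k : ℤ, 0 < k ∧ a n = (k : ℚ) := by
  set b : ℕ → ℤ := fun n => (a n).num with hbdef
  have hb0 : b 0 = 1 := by simp [hbdef, h0]
  have hb1 : b 1 = 1 := by simp [hbdef, h1]
  have hb2 : b 2 = 1 := by simp [hbdef, h2]
  have hb3 : b 3 = 1 := by simp [hbdef, h3]
  have main : ∀ n, (0 < b n ∧ a n = (b n : ℚ)) ∧
      (∀ m, m < n → n ≤ m + 3 → IsCoprime (b m) (b n)) := by
    intro n
    induction n using Nat.strong_induction_on with
    | _ n ih =>
      obtain _|_|_|_|m := n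
      · exact ⟨⟨by rw [hb0]; norm_num, by rw [hb0, h0]; norm_num⟩, fun m hm _ => by omega⟩
      · refine show (0 < b 1 ∧ a 1 = (b 1 : ℚ)) ∧ _ from
          ⟨⟨by rw [hb1]; norm_num, by rw [hb1, h1]; norm_num⟩,
          fun m hm _ => by rw [hb1]; exact isCoprime_one_right⟩
      · refine show (0 < b 2 ∧ a 2 = (b 2 : ℚ)) ∧ _ from
          ⟨⟨by rw [hb2]; norm_num, by rw [hb2, h2]; norm_num⟩,
          fun m hm _ => by rw [hb2]; exact isCoprime_one_right⟩
      · refine show (0 < b 3 ∧ a 3 = (b 3 : ℚ)) ∧ _ from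
          ⟨⟨by rw [hb3]; norm_num, by rw [hb3, h3]; norm_num⟩,
          fun m hm _ => by rw [hb3]; exact isCoprime_one_right⟩
      · -- n = m + 4
        show (0 < b (m+4) ∧ a (m+4) = (b (m+4) : ℚ)) ∧
          ∀ m', m' < m + 4 → m + 4 ≤ m' + 3 → IsCoprime (b m') (b (m+4))
        have hpos : ∀ i, i ≤ m + 3 → 0 < b i := fun i hi => (ih i (by omega)).1.1
        have hai : ∀ i, i ≤ m + 3 → a i = (b i : ℚ) := fun i hi => (ih i (by omega)).1.2
        have ihcop : ∀ i j, i < j → j ≤ i + 3 → j ≤ m + 3 → IsCoprime (b i) (b j) :=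
          fun i j hij hij3 hjm => (ih j (by omega)).2 i hij hij3
        -- integer form of the recurrence for early indices
        have hrecZ : ∀ i, i + 4 ≤ m + 3 →
            b i * b (i + 4) = b (i + 1) * b (i + 3) + b (i + 2) ^ 2 := by
          intro i hi
          have hne : a i ≠ 0 := by
            rw [hai i (by omega)]
            exact_mod_cast (hpos i (by omega)).ne'
          have h := hrec i
          rw [eq_div_iff hne] at h
          rw [hai i (by omega), hai (i+1) (by omega), hai (i+2) (by omega),
            hai (i+3) (by omega), hai (i+4) (by omega)] at h
          have h' : b (i+4) * b i = b (i+1) * b (i+3) + b (i+2) ^ 2 := by exact_mod_cast h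
          linarith [h']
        -- divisibility
        have hdvd : b m ∣ b (m + 1) * b (m + 3) + b (m + 2) ^ 2 := by
          obtain _|_|_|_|j := m
          · rw [hb0]; exact one_dvd _
          · rw [hb1]; exact one_dvd _
          · rw [hb2]; exact one_dvd _
          · rw [hb3]; exact one_dvd _
          · -- m = j + 4
            have r0 : b j * b (j+4) = b (j+1) * b (j+3) + b (j+2) ^ 2 :=
              hrecZ j (by omega)
            have r1 : b (j+1) * b (j+5) = b (j+2) * b (j+4) + b (j+3) ^ 2 :=
              hrecZ (j+1) (by omega)
            have r2 : b (j+2) * b (j+6) = b (j+3) * b (j+5) + b (j+4) ^ 2 :=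
              hrecZ (j+2) (by omega)
            have r3 : b (j+3) * b (j+7) = b (j+4) * b (j+6) + b (j+5) ^ 2 :=
              hrecZ (j+3) (by omega)
            have c1 : IsCoprime (b (j+1)) (b (j+4)) := ihcop (j+1) (j+4) (by omega) (by omega) (by omega)
            have c2 : IsCoprime (b (j+2)) (b (j+4)) := ihcop (j+2) (j+4) (by omega) (by omega) (by omega)
            have c3 : IsCoprime (b (j+3)) (b (j+4)) := ihcop (j+3) (j+4) (by omega) (by omega) (by omega)
            have key : b (j+4) ∣ (b (j+1) ^ 2 * b (j+2) ^ 2 * b (j+3)) *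
                (b (j+5) * b (j+7) + b (j+6) ^ 2) := by
              refine ⟨b j * b (j+1) * b (j+3) ^ 2 * b (j+5) ^ 2
                + b (j+1) * b (j+2) ^ 3 * b (j+5) ^ 2
                + b (j+1) ^ 2 * b (j+2) ^ 2 * b (j+5) * b (j+6)
                + 2 * b (j+1) ^ 2 * b (j+3) ^ 2 * b (j+4) * b (j+5)
                + b (j+1) ^ 2 * b (j+3) * b (j+4) ^ 3, ?_⟩
              linear_combination (-(b (j+1) * b (j+3) ^ 2 * b (j+5) ^ 2)) * r0
                + (b (j+1) * b (j+2) ^ 2 * b (j+5) ^ 2) * r1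
                + (b (j+1) ^ 2 * b (j+3) * (b (j+2) * b (j+6) + b (j+3) * b (j+5) + b (j+4) ^ 2)) * r2
                + (b (j+1) ^ 2 * b (j+2) ^ 2 * b (j+5)) * r3
            have cop : IsCoprime (b (j+4)) (b (j+1) ^ 2 * b (j+2) ^ 2 * b (j+3)) :=
              ((c1.symm.pow_right).mul_right (c2.symm.pow_right)).mul_right c3.symm
            exact cop.dvd_of_dvd_mul_left key
        obtain ⟨k, hk⟩ := hdvd
        have hbmpos : 0 < b m := hpos m (by omega)
        have hNpos : 0 < b (m + 1) * b (m + 3) + b (m + 2) ^ 2 := by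
          have p1 := hpos (m+1) (by omega)
          have p2 := hpos (m+2) (by omega)
          have p3 := hpos (m+3) (by omega)
          nlinarith
        have hkpos : 0 < k := by nlinarith
        have hne : a m ≠ 0 := by
          rw [hai m (by omega)]
          exact_mod_cast hbmpos.ne'
        have ham4 : a (m + 4) = (k : ℚ) := by
          rw [hrec m, hai m (by omega), hai (m+1) (by omega), hai (m+2) (by omega),
            hai (m+3) (by omega), div_eq_iff (by exact_mod_cast hbmpos.ne')]
          have hq : ((b (m+1) : ℚ)) * b (m+3) + (b (m+2) : ℚ) ^ 2 = (b m : ℚ) * (k : ℚ) := by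
            exact_mod_cast hk
          linear_combination hq
        have hbm4 : b (m + 4) = k := by
          simp [hbdef, ham4]
        have rZ : b m * b (m + 4) = b (m + 1) * b (m + 3) + b (m + 2) ^ 2 := by
          rw [hbm4]; exact hk.symm
        refine ⟨⟨by rw [hbm4]; exact hkpos, by rw [hbm4]; exact ham4⟩, ?_⟩
        intro m' hlt hle
        have c12 : IsCoprime (b (m+1)) (b (m+2)) := ihcop (m+1) (m+2) (by omega) (by omega) (by omega)
        have c13 : IsCoprime (b (m+1)) (b (m+3)) := ihcop (m+1) (m+3) (by omega) (by omega) (by omega)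
        have c23 : IsCoprime (b (m+2)) (b (m+3)) := ihcop (m+2) (m+3) (by omega) (by omega) (by omega)
        have hm' : m' = m + 1 ∨ m' = m + 2 ∨ m' = m + 3 := by omega
        rcases hm' with rfl | rfl | rfl
        · -- IsCoprime (b (m+1)) (b (m+4))
          have h1 : IsCoprime (b (m+1)) (b (m+2) ^ 2) := c12.pow_right
          have h2 : IsCoprime (b (m+1)) (b m * b (m+4)) := by
            rw [show b m * b (m+4) = b (m+2) ^ 2 + b (m+1) * b (m+3) by linear_combination rZ]
            exact h1.add_mul_left_right _
          exact h2.of_isCoprime_of_dvd_right (dvd_mul_left _ _)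
        · -- IsCoprime (b (m+2)) (b (m+4))
          have h1 : IsCoprime (b (m+2)) (b (m+1) * b (m+3)) := c12.symm.mul_right c23
          have h2 : IsCoprime (b (m+2)) (b m * b (m+4)) := by
            rw [show b m * b (m+4) = b (m+1) * b (m+3) + b (m+2) * b (m+2) by linear_combination rZ]
            exact h1.add_mul_left_right _
          exact h2.of_isCoprime_of_dvd_right (dvd_mul_left _ _)
        · -- IsCoprime (b (m+3)) (b (m+4))
          have h1 : IsCoprime (b (m+3)) (b (m+2) ^ 2) := c23.symm.pow_right
          have h2 : IsCoprime (b (m+3)) (b m * b (m+4)) := by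
            rw [show b m * b (m+4) = b (m+2) ^ 2 + b (m+3) * b (m+1) by linear_combination rZ]
            exact h1.add_mul_left_right _
          exact h2.of_isCoprime_of_dvd_right (dvd_mul_left _ _)
  intro n
  obtain ⟨⟨hp, he⟩, -⟩ := main n
  exact ⟨b n, hp, he⟩
end

section
/- Every term of the Somos-5 sequence is an integer: if b_0 = ... = b_4 = 1 and b_n b_{n+5} = b_{n+1} b_{n+4} + b_{n+2} b_{n+3}, then b_n is a (positive) integer for every n ≥ 0. -/
/-- Every term of the Somos-5 sequence is a positive integer. -/
theorem somos5_integral (b : ℕ → ℚ)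
    (h0 : b 0 = 1) (h1 : b 1 = 1) (h2 : b 2 = 1) (h3 : b 3 = 1) (h4 : b 4 = 1)
    (hrec : ∀ n, b n * b (n + 5) = b (n + 1) * b (n + 4) + b (n + 2) * b (n + 3)) :
    ∀ n, ∃ k : ℤ, 0 < k ∧ b n = (k : ℚ) := by
  -- positivity
  have pos : ∀ n, 0 < b n := by
    have key : ∀ n, 0 < b n ∧ 0 < b (n+1) ∧ 0 < b (n+2) ∧ 0 < b (n+3) ∧ 0 < b (n+4) := by
      intro n
      induction n with
      | zero => norm_num [h0, h1, h2, h3, h4]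
      | succ n ih =>
        obtain ⟨p0, p1, p2, p3, p4⟩ := ih
        refine ⟨p1, p2, p3, p4, ?_⟩
        have hm : 0 < b n * b (n+5) := by rw [hrec n]; positivity
        by_contra hc
        push_neg at hc
        nlinarith
    intro n; exact (key n).1
  have hne : ∀ n, b n ≠ 0 := fun n => (pos n).ne'
  -- auxiliary relation
  have Elem : ∀ n, ∃ p : ℤ, b n * b (n+4) + b (n+2)^2 = (p:ℚ) * (b (n+1) * b (n+3)) := by
    have key : ∀ n, (∃ p : ℤ, b n * b (n+4) + b (n+2)^2 = (p:ℚ) * (b (n+1) * b (n+3))) ∧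
        (∃ p : ℤ, b (n+1) * b (n+5) + b (n+3)^2 = (p:ℚ) * (b (n+2) * b (n+4))) := by
      intro n
      induction n with
      | zero =>
        constructor
        · exact ⟨2, by rw [h0, h1, h2, h3, h4]; norm_num⟩
        · have hb5 : b 5 = 2 := by
            have := hrec 0
            rw [h0, h1, h2, h3, h4] at this
            linarith
          exact ⟨3, by rw [h1, h2, h3, h4, hb5]; norm_num⟩
      | succ n ih =>
        refine ⟨ih.2, ?_⟩
        obtain ⟨p, hp⟩ := ih.1
        refine ⟨p, ?_⟩
        apply mul_left_cancel₀ (hne (n+1))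
        linear_combination b (n+2) * hrec (n+1) - b (n+4) * hrec n + b (n+5) * hp
    intro n; exact (key n).1
  -- main invariant
  have main : ∀ n, ∃ a0 a1 a2 a3 a4 : ℤ,
      b n = a0 ∧ b (n+1) = a1 ∧ b (n+2) = a2 ∧ b (n+3) = a3 ∧ b (n+4) = a4 ∧
      IsCoprime a0 a1 ∧ IsCoprime a0 a2 ∧ IsCoprime a0 a3 ∧ IsCoprime a0 a4 ∧
      IsCoprime a1 a2 ∧ IsCoprime a1 a3 ∧ IsCoprime a1 a4 ∧
      IsCoprime a2 a3 ∧ IsCoprime a2 a4 ∧ IsCoprime a3 a4 := by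
    intro n
    induction n with
    | zero =>
      refine ⟨1, 1, 1, 1, 1, ?_, ?_, ?_, ?_, ?_, ?_, ?_, ?_, ?_, ?_, ?_, ?_, ?_, ?_, ?_⟩ <;>
        simp [h0, h1, h2, h3, h4, isCoprime_one_left]
    | succ n ih =>
      obtain ⟨a0, a1, a2, a3, a4, e0, e1, e2, e3, e4,
        c01, c02, c03, c04, c12, c13, c14, c23, c24, c34⟩ := ih
      obtain ⟨p, hp⟩ := Elem (n+1)
      have ha0 : (a0:ℚ) ≠ 0 := by rw [← e0]; exact hne n
      have ha0z : a0 ≠ 0 := by exact_mod_cast ha0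
      have hA : (a0:ℚ) * b (n+5) = ((a1*a4 + a2*a3 : ℤ) : ℚ) := by
        push_cast
        rw [← e0, ← e1, ← e2, ← e3, ← e4]
        linear_combination hrec n
      have hB : (a1:ℚ) * b (n+5) = ((p*a2*a4 - a3^2 : ℤ) : ℚ) := by
        push_cast
        rw [← e1, ← e2, ← e3, ← e4]
        linear_combination hp
      have hZ : a1 * (a1*a4 + a2*a3) = a0 * (p*a2*a4 - a3^2) := by
        have hq : (a1:ℚ) * ((a1*a4 + a2*a3 : ℤ) : ℚ) = (a0:ℚ) * ((p*a2*a4 - a3^2 : ℤ) : ℚ) := by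
          rw [← hA, ← hB]; ring
        exact_mod_cast hq
      obtain ⟨k5, hk5⟩ := c01.dvd_of_dvd_mul_left ⟨_, hZ⟩
      -- hk5 : a1*a4 + a2*a3 = a0 * k5
      have e5 : b (n+5) = (k5:ℚ) := by
        apply mul_left_cancel₀ ha0
        rw [hA, hk5]; push_cast; ring
      have eA : a0 * k5 = a1*a4 + a2*a3 := hk5.symm
      have eB : a1 * k5 = p*a2*a4 - a3^2 := by
        apply mul_left_cancel₀ ha0z
        have := hZ
        rw [hk5] at this
        linear_combination this
      have c15 : IsCoprime a1 k5 := by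
        have h' : IsCoprime a1 (a2*a3 + a1*a4) := (c12.mul_right c13).add_mul_left_right a4
        have heq : a0 * k5 = a2*a3 + a1*a4 := by linear_combination eA
        rw [← heq] at h'
        exact h'.of_mul_right_right
      have c25 : IsCoprime a2 k5 := by
        have h' : IsCoprime a2 (a1*a4 + a2*a3) := (c12.symm.mul_right c24).add_mul_left_right a3
        rw [← eA] at h'
        exact h'.of_mul_right_right
      have c35 : IsCoprime a3 k5 := by
        have h' : IsCoprime a3 (a1*a4 + a3*a2) := (c13.symm.mul_right c34).add_mul_left_right a2
        have heq : a0 * k5 = a1*a4 + a3*a2 := by linear_combination eA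
        rw [← heq] at h'
        exact h'.of_mul_right_right
      have c45 : IsCoprime a4 k5 := by
        have h' : IsCoprime a4 (-(a3*a3) + a4*(p*a2)) :=
          ((c34.symm.mul_right c34.symm).neg_right).add_mul_left_right (p*a2)
        have heq : a1 * k5 = -(a3*a3) + a4*(p*a2) := by linear_combination eB
        rw [← heq] at h'
        exact h'.of_mul_right_right
      exact ⟨a1, a2, a3, a4, k5, e1, e2, e3, e4, e5,
        c12, c13, c14, c15, c23, c24, c25, c34, c35, c45⟩
  intro n
  obtain ⟨a0, _, _, _, _, e0, _⟩ := main n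
  refine ⟨a0, ?_, e0⟩
  have := pos n
  rw [e0] at this
  exact_mod_cast this
end

section
/- The Somos-4 sequence satisfies the fifth-order recurrence a_n a_{n-5} = 5 a_{n-3} a_{n-2} − a_{n-4} a_{n-1} for all n (with the sequence extended to all integers by a_n = a_{3-n}). -/
/-!
Writing `x n = a n a (n+5) + a (n+1) a (n+4)` and `y n = a (n+2) a (n+3)`, two instances of the
Somos-4 recurrence give `a (n+2) x (n+1) = a (n+4) x n`, while trivially
`a (n+2) y (n+1) = a (n+4) y n`. Since the terms never vanish (they are all positive, forwards and
backwards from four positive initial values), the ratio `x n / y n` is constant, and for the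
initial values `1, 1, 1, 1, 2, 3` it equals `5`.
-/

theorem Int.forall_of_forall_iff_add_one {p : ℤ → Prop} (hp : ∀ n, p n ↔ p (n + 1)) (h0 : p 0) :
    ∀ n, p n := fun n =>
  Int.inductionOn' n 0 h0 (fun k _ hk => (hp k).1 hk)
    (fun k _ hk => (hp (k - 1)).2 (by rwa [sub_add_cancel]))

def IsSomos4 {R : Type*} [CommRing R] (a : ℤ → R) : Prop :=
  ∀ n, a n * a (n + 4) = a (n + 1) * a (n + 3) + a (n + 2) ^ 2

namespace IsSomos4

variable {R : Type*} [CommRing R] {a : ℤ → R}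

theorem pos [LinearOrder R] [IsStrictOrderedRing R] (ha : IsSomos4 a)
    (h0 : 0 < a 0) (h1 : 0 < a 1) (h2 : 0 < a 2) (h3 : 0 < a 3) (n : ℤ) : 0 < a n := by
  suffices ∀ n, 0 < a n ∧ 0 < a (n + 1) ∧ 0 < a (n + 2) ∧ 0 < a (n + 3) from (this n).1
  refine Int.forall_of_forall_iff_add_one (fun n => ?_) ⟨h0, h1, h2, h3⟩
  have hprod : 0 < a (n + 1) * a (n + 3) → 0 < a n * a (n + 4) := fun h => by
    rw [ha n]; positivity
  simp only [add_assoc, Int.reduceAdd]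
  constructor
  · rintro ⟨hn, hn1, hn2, hn3⟩
    exact ⟨hn1, hn2, hn3, pos_of_mul_pos_right (hprod (mul_pos hn1 hn3)) hn.le⟩
  · rintro ⟨hn1, hn2, hn3, hn4⟩
    exact ⟨pos_of_mul_pos_left (hprod (mul_pos hn1 hn3)) hn4.le, hn1, hn2, hn3⟩

theorem mul_fifth_order_succ (ha : IsSomos4 a) (n : ℤ) :
    a (n + 2) * (a (n + 1) * a (n + 6) + a (n + 2) * a (n + 5)) =
      a (n + 4) * (a n * a (n + 5) + a (n + 1) * a (n + 4)) := by
  have h := ha n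
  have h' := ha (n + 2)
  ring_nf at h h' ⊢
  linear_combination a (1 + n) * h' - a (5 + n) * h

theorem fifth_order [IsDomain R] (ha : IsSomos4 a) (hne : ∀ n, a n ≠ 0) {c : R}
    (h0 : a 0 * a 5 + a 1 * a 4 = c * a 2 * a 3) (n : ℤ) :
    a n * a (n + 5) + a (n + 1) * a (n + 4) = c * a (n + 2) * a (n + 3) := by
  refine Int.forall_of_forall_iff_add_one
    (p := fun m => a m * a (m + 5) + a (m + 1) * a (m + 4) = c * a (m + 2) * a (m + 3))
    (fun m => ?_) h0 n
  have hy : a (m + 4) * (c * a (m + 2) * a (m + 3)) = a (m + 2) * (c * a (m + 3) * a (m + 4)) := by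
    ring
  rw [← (mul_right_injective₀ (hne (m + 4))).eq_iff, ← ha.mul_fifth_order_succ m, hy,
    (mul_right_injective₀ (hne (m + 2))).eq_iff]
  ring_nf

end IsSomos4

theorem somos4_fifth_order_general (a : ℤ → ℤ)
    (h0 : a 0 = 1) (h1 : a 1 = 1) (h2 : a 2 = 1) (h3 : a 3 = 1)
    (hrec : ∀ n : ℤ, a n * a (n + 4) = a (n + 1) * a (n + 3) + a (n + 2) ^ 2) :
    ∀ n : ℤ, a n * a (n - 5) = 5 * a (n - 3) * a (n - 2) - a (n - 4) * a (n - 1) := by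
  have ha : IsSomos4 a := hrec
  have h4 : a 4 = 2 := by simpa [h0, h1, h2, h3] using hrec 0
  have h5 : a 5 = 3 := by simpa [h1, h2, h3, h4] using hrec 1
  have hne n : a n ≠ 0 :=
    (ha.pos (by simp [h0]) (by simp [h1]) (by simp [h2]) (by simp [h3]) n).ne'
  have hfifth := ha.fifth_order hne (c := 5) (by rw [h0, h1, h2, h3, h4, h5]; norm_num)
  intro n
  have hshift := hfifth (n - 5)
  ring_nf at hshift ⊢
  linear_combination hshift

/-- The Somos-4 sequence (extended to all integers, palindromic about 3/2)
satisfies the fifth-order recurrence `a n * a (n-5) = 5 a(n-3) a(n-2) - a(n-4) a(n-1)`. -/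
theorem somos4_fifth_order (a : ℤ → ℤ)
    (h0 : a 0 = 1) (h1 : a 1 = 1) (h2 : a 2 = 1) (h3 : a 3 = 1)
    (hrec : ∀ n : ℤ, a n * a (n + 4) = a (n + 1) * a (n + 3) + a (n + 2) ^ 2)
    (hpal : ∀ n : ℤ, a n = a (3 - n)) :
    ∀ n : ℤ, a n * a (n - 5) = 5 * a (n - 3) * a (n - 2) - a (n - 4) * a (n - 1) :=
  somos4_fifth_order_general a h0 h1 h2 h3 hrec
end

section
/- The Somos-4 sequence satisfies the fourth-order quartic relation a_{x-1}^2 a_{x+2}^2 + a_x^3 a_{x+2} + a_{x-1} a_{x+1}^3 + a_x^2 a_{x+1}^2 = 4 a_{x-1} a_x a_{x+1} a_{x+2} for all integers x. -/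
/-- Conjecture 4a: the Somos-4 sequence satisfies the quartic relation
`a(x-1)^2 a(x+2)^2 + a x ^3 a(x+2) + a(x-1) a(x+1)^3 + a x^2 a(x+1)^2
  = 4 a(x-1) a x a(x+1) a(x+2)`. -/
theorem somos4_quartic_relation (a : ℤ → ℤ)
    (h0 : a 0 = 1) (h1 : a 1 = 1) (h2 : a 2 = 1) (h3 : a 3 = 1)
    (hrec : ∀ n : ℤ, a n * a (n + 4) = a (n + 1) * a (n + 3) + a (n + 2) ^ 2)
    (hpal : ∀ n : ℤ, a n = a (3 - n)) :
    ∀ x : ℤ, a (x - 1) ^ 2 * a (x + 2) ^ 2 + a x ^ 3 * a (x + 2)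
        + a (x - 1) * a (x + 1) ^ 3 + a x ^ 2 * a (x + 1) ^ 2
      = 4 * (a (x - 1) * a x * a (x + 1) * a (x + 2)) := by
  -- positivity of all terms at nonnegative indices
  have pos : ∀ n : ℕ, 0 < a n ∧ 0 < a (n + 1) ∧ 0 < a (n + 2) ∧ 0 < a (n + 3) := by
    intro n
    induction n with
    | zero => simp [h0, h1, h2, h3]
    | succ k ih =>
      obtain ⟨p0, p1, p2, p3⟩ := ih
      have hr := hrec (k : ℤ)
      have p4 : 0 < a ((k : ℤ) + 4) := by
        by_contra h
        push_neg at h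
        nlinarith
      have e : ((k : ℤ) + 1) + 3 = (k : ℤ) + 4 := by ring
      refine ⟨?_, ?_, ?_, ?_⟩ <;> push_cast
      · exact p1
      · exact p2
      · exact p3
      · rw [e]; exact p4
  -- the relation for x = 1 + n, n : ℕ, by induction
  have key : ∀ n : ℕ, ∀ x : ℤ, x = 1 + n →
      a (x - 1) ^ 2 * a (x + 2) ^ 2 + a x ^ 3 * a (x + 2)
        + a (x - 1) * a (x + 1) ^ 3 + a x ^ 2 * a (x + 1) ^ 2
      = 4 * (a (x - 1) * a x * a (x + 1) * a (x + 2)) := by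
    intro n
    induction n with
    | zero =>
      intro x hx
      norm_num at hx
      subst hx
      norm_num [h0, h1, h2, h3]
    | succ k ih =>
      intro x hx
      have hx' : x - 1 = 1 + (k : ℤ) := by push_cast at hx ⊢; omega
      have IH := ih (x - 1) hx'
      have hr := hrec (x - 2)
      have hb : 0 < a (x - 2) := by
        have := (pos k).1
        have hk : ((k : ℕ) : ℤ) = x - 2 := by omega
        rwa [hk] at this
      -- rewrite the indices of hr and IH in terms of x
      have e1 : x - 2 + 4 = x + 2 := by ring
      have e2 : x - 2 + 1 = x - 1 := by ring
      have e3 : x - 2 + 3 = x + 1 := by ring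
      have e4 : x - 2 + 2 = x := by ring
      rw [e1, e2, e3, e4] at hr
      have e5 : x - 1 - 1 = x - 2 := by ring
      have e6 : x - 1 + 2 = x + 1 := by ring
      have e7 : x - 1 + 1 = x := by ring
      rw [e5, e6, e7] at IH
      -- b * (goal LHS - goal RHS) = f * (IH LHS - IH RHS) + (c²f - be²)(bf - ce - d²)
      have hmul : a (x - 2) *
          (a (x - 1) ^ 2 * a (x + 2) ^ 2 + a x ^ 3 * a (x + 2)
            + a (x - 1) * a (x + 1) ^ 3 + a x ^ 2 * a (x + 1) ^ 2
            - 4 * (a (x - 1) * a x * a (x + 1) * a (x + 2))) = 0 := by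
        linear_combination (a (x - 1) ^ 2 * a (x + 2) - a (x - 2) * a (x + 1) ^ 2) * hr
          + a (x + 2) * IH
      have := mul_eq_zero.mp hmul
      rcases this with h | h
      · exact absurd h hb.ne'
      · linarith
  intro x
  rcases le_or_gt 1 x with hx | hx
  · exact key (x - 1).toNat x (by omega)
  · -- use palindromy: a n = a (3 - n); the relation at x follows from the one at 2 - x
    have hy := key (1 - x).toNat (2 - x) (by omega)
    have p1 := hpal (x - 1)
    have p2 := hpal x
    have p3 := hpal (x + 1)
    have p4 := hpal (x + 2)
    have e1 : (3 : ℤ) - (x - 1) = 2 - x + 2 := by ring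
    have e2 : (3 : ℤ) - x = 2 - x + 1 := by ring
    have e3 : (3 : ℤ) - (x + 1) = 2 - x := by ring
    have e4 : (3 : ℤ) - (x + 2) = 2 - x - 1 := by ring
    rw [e1] at p1; rw [e2] at p2; rw [e3] at p3; rw [e4] at p4
    rw [p1, p2, p3, p4]
    linarith [hy]
end

section
/- For any function of the form f(t) = b·u^{t^2}·sin(t·y) (with b, u, y complex, u ≠ 0), the 3×3 determinant det[ f(x_i − y_j)·f(x_i + y_j) ]_{1≤i,j≤3} vanishes for all complex x_1, x_2, x_3, y_1, y_2, y_3. -/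
/-- For `f t = b * u^(t^2) * sin (t * y)` (with `u = exp l ≠ 0`), the 3×3 determinant
`det [f(xᵢ - yⱼ) f(xᵢ + yⱼ)]` vanishes identically. -/
theorem gauge_sin_det_vanishes (b u l y : ℂ) (hu : u ≠ 0) (hl : Complex.exp l = u)
    (f : ℂ → ℂ) (hf : ∀ t, f t = b * Complex.exp (t ^ 2 * l) * Complex.sin (t * y))
    (x z : Fin 3 → ℂ) :
    Matrix.det (Matrix.of fun i j : Fin 3 => f (x i - z j) * f (x i + z j)) = 0 := by
  have key : ∀ i j : Fin 3, f (x i - z j) * f (x i + z j) =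
      (b ^ 2 / 2 * Complex.exp (2 * (x i) ^ 2 * l)) * Complex.exp (2 * (z j) ^ 2 * l) *
        (Complex.cos (2 * z j * y) - Complex.cos (2 * x i * y)) := by
    intro i j
    rw [hf, hf]
    have h1 : Complex.exp ((x i - z j) ^ 2 * l) * Complex.exp ((x i + z j) ^ 2 * l)
        = Complex.exp (2 * (x i) ^ 2 * l) * Complex.exp (2 * (z j) ^ 2 * l) := by
      rw [← Complex.exp_add, ← Complex.exp_add]
      ring_nf
    have h2 : Complex.cos (2 * z j * y) - Complex.cos (2 * x i * y)
        = 2 * Complex.sin ((x i - z j) * y) * Complex.sin ((x i + z j) * y) := by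
      rw [Complex.cos_sub_cos,
        show (2 * z j * y + 2 * x i * y) / 2 = (x i + z j) * y by ring,
        show (2 * z j * y - 2 * x i * y) / 2 = -((x i - z j) * y) by ring,
        Complex.sin_neg]
      ring
    rw [h2]
    linear_combination (b ^ 2 * Complex.sin ((x i - z j) * y) *
      Complex.sin ((x i + z j) * y)) * h1
  have : (Matrix.of fun i j : Fin 3 => f (x i - z j) * f (x i + z j)) =
      Matrix.of fun i j : Fin 3 =>
        (b ^ 2 / 2 * Complex.exp (2 * (x i) ^ 2 * l)) * Complex.exp (2 * (z j) ^ 2 * l) *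
          (Complex.cos (2 * z j * y) - Complex.cos (2 * x i * y)) := by
    ext i j; exact key i j
  rw [this]
  simp [Matrix.det_fin_three]
  ring
end

section
/- Let φ = (1+√5)/2. The specialization of the Somos-4oid sequence at x = φ satisfies s_{6q+r}(φ) = (−1)^q φ^{3q(q+1)} · c_r(q), where c_0(q)=0, c_1(q)=φ^{−2q}, c_2(q)=φ^{−q}, c_3(q)=−1, c_4(q)=φ^{q+1}, c_5(q)=φ^{2q+2}, for all integers q and 0 ≤ r ≤ 5. -/
/-- The Somos-4oid sequence at the golden ratio `φ` consists of six interlaced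
geometric-type progressions: taking the closed form as the definition, it has the
right initial values and satisfies the Somos-4 relation wherever the divisor
is nonzero. -/
theorem somos4oid_at_golden_ratio (φ : ℝ) (hφ : φ = (1 + Real.sqrt 5) / 2)
    (s : ℤ → ℝ)
    (hs0 : ∀ q : ℤ, s (6 * q) = 0)
    (hs1 : ∀ q : ℤ, s (6 * q + 1) = (-1 : ℝ) ^ q * φ ^ (3 * q * (q + 1)) * φ ^ (-(2 * q)))
    (hs2 : ∀ q : ℤ, s (6 * q + 2) = (-1 : ℝ) ^ q * φ ^ (3 * q * (q + 1)) * φ ^ (-q))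
    (hs3 : ∀ q : ℤ, s (6 * q + 3) = (-1 : ℝ) ^ q * φ ^ (3 * q * (q + 1)) * (-1))
    (hs4 : ∀ q : ℤ, s (6 * q + 4) = (-1 : ℝ) ^ q * φ ^ (3 * q * (q + 1)) * φ ^ (q + 1))
    (hs5 : ∀ q : ℤ, s (6 * q + 5) = (-1 : ℝ) ^ q * φ ^ (3 * q * (q + 1)) * φ ^ (2 * q + 2)) :
    s (-1) = -1 ∧ s 0 = 0 ∧ s 1 = 1 ∧ s 2 = 1 ∧ s 3 = -1 ∧ s 4 = φ ∧
    (∀ n : ℤ, s (n - 4) ≠ 0 →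
      s n * s (n - 4) = s (n - 1) * s (n - 3) + s (n - 2) ^ 2) := by
  have h5 : Real.sqrt 5 ^ 2 = 5 := Real.sq_sqrt (by norm_num)
  have h5n : (0:ℝ) ≤ Real.sqrt 5 := Real.sqrt_nonneg 5
  have hφ2 : φ ^ 2 = φ + 1 := by rw [hφ]; nlinarith [h5]
  have hφ0 : φ ≠ 0 := by rw [hφ]; nlinarith [h5n]
  have hneg : ∀ a : ℤ, (-1:ℝ)^a * (-1:ℝ)^a = 1 := by
    intro a
    rw [← zpow_add₀ (by norm_num : (-1:ℝ) ≠ 0)]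
    exact Even.neg_one_zpow ⟨a, by ring⟩
  have hneg1 : ∀ a : ℤ, (-1:ℝ)^a * (-1:ℝ)^(a-1) = -1 := by
    intro a
    rw [← zpow_add₀ (by norm_num : (-1:ℝ) ≠ 0)]
    exact Odd.neg_one_zpow ⟨a - 1, by ring⟩
  have hpow : ∀ a b : ℤ, φ ^ a * φ ^ b = φ ^ (a + b) := fun a b => (zpow_add₀ hφ0 a b).symm
  have k1 : ∀ m a b c d : ℤ, ((-1:ℝ)^m * φ^a * φ^b) * ((-1:ℝ)^m * φ^c * φ^d)
      = φ ^ (a+b+(c+d)) := by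
    intro m a b c d
    calc ((-1:ℝ)^m * φ^a * φ^b) * ((-1:ℝ)^m * φ^c * φ^d)
        = ((-1:ℝ)^m * (-1:ℝ)^m) * ((φ^a * φ^b) * (φ^c * φ^d)) := by ring
      _ = φ ^ (a+b+(c+d)) := by rw [hneg, hpow, hpow, hpow, one_mul]
  have k2 : ∀ m a b c : ℤ, ((-1:ℝ)^m * φ^a * φ^b) * ((-1:ℝ)^m * φ^c * (-1))
      = -φ ^ (a+b+c) := by
    intro m a b c
    calc ((-1:ℝ)^m * φ^a * φ^b) * ((-1:ℝ)^m * φ^c * (-1))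
        = -(((-1:ℝ)^m * (-1:ℝ)^m) * ((φ^a * φ^b) * φ^c)) := by ring
      _ = -φ ^ (a+b+c) := by rw [hneg, hpow, hpow, one_mul]
  have kA : ∀ m a b c : ℤ, ((-1:ℝ)^m * φ^a * φ^b) * ((-1:ℝ)^(m-1) * φ^c * (-1))
      = φ ^ (a+b+c) := by
    intro m a b c
    calc ((-1:ℝ)^m * φ^a * φ^b) * ((-1:ℝ)^(m-1) * φ^c * (-1))
        = -(((-1:ℝ)^m * (-1:ℝ)^(m-1)) * ((φ^a * φ^b) * φ^c)) := by ring
      _ = φ ^ (a+b+c) := by rw [hneg1, hpow, hpow]; ring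
  have kB : ∀ m a b c d : ℤ, ((-1:ℝ)^m * φ^a * φ^b) * ((-1:ℝ)^(m-1) * φ^c * φ^d)
      = -φ ^ (a+b+(c+d)) := by
    intro m a b c d
    calc ((-1:ℝ)^m * φ^a * φ^b) * ((-1:ℝ)^(m-1) * φ^c * φ^d)
        = ((-1:ℝ)^m * (-1:ℝ)^(m-1)) * ((φ^a * φ^b) * (φ^c * φ^d)) := by ring
      _ = -φ ^ (a+b+(c+d)) := by rw [hneg1, hpow, hpow, hpow]; ring
  have kC : ∀ m a c d : ℤ, ((-1:ℝ)^m * φ^a * (-1)) * ((-1:ℝ)^(m-1) * φ^c * φ^d)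
      = φ ^ (a+(c+d)) := by
    intro m a c d
    calc ((-1:ℝ)^m * φ^a * (-1)) * ((-1:ℝ)^(m-1) * φ^c * φ^d)
        = -(((-1:ℝ)^m * (-1:ℝ)^(m-1)) * (φ^a * (φ^c * φ^d))) := by ring
      _ = φ ^ (a+(c+d)) := by rw [hneg1, hpow, hpow]; ring
  have k6 : ∀ m a b : ℤ, ((-1:ℝ)^m * φ^a * φ^b) ^ 2 = φ ^ (a+b+(a+b)) := by
    intro m a b
    calc ((-1:ℝ)^m * φ^a * φ^b) ^ 2
        = ((-1:ℝ)^m * (-1:ℝ)^m) * ((φ^a * φ^b) * (φ^a * φ^b)) := by ring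
      _ = φ ^ (a+b+(a+b)) := by rw [hneg, hpow, hpow, one_mul]
  have k8 : ∀ m a : ℤ, ((-1:ℝ)^m * φ^a * (-1)) ^ 2 = φ ^ (a+a) := by
    intro m a
    calc ((-1:ℝ)^m * φ^a * (-1)) ^ 2
        = ((-1:ℝ)^m * (-1:ℝ)^m) * (φ^a * φ^a) := by ring
      _ = φ ^ (a+a) := by rw [hneg, hpow, one_mul]
  refine ⟨?_, ?_, ?_, ?_, ?_, ?_, ?_⟩
  · have h := hs5 (-1); norm_num at h; exact h
  · simpa using hs0 0
  · have h := hs1 0; norm_num at h; exact h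
  · have h := hs2 0; norm_num at h; exact h
  · have h := hs3 0; norm_num at h; exact h
  · have h := hs4 0; norm_num at h; exact h
  · intro n hn
    obtain ⟨q, r, hr0, hr5, rfl⟩ : ∃ q r : ℤ, 0 ≤ r ∧ r < 6 ∧ n = 6*q + r :=
      ⟨n / 6, n % 6, by omega, by omega, by omega⟩
    interval_cases r
    · -- r = 0
      rw [show (6*q+0-1:ℤ) = 6*(q-1)+5 by ring, show (6*q+0-2:ℤ) = 6*(q-1)+4 by ring,
          show (6*q+0-3:ℤ) = 6*(q-1)+3 by ring, show (6*q+0-4:ℤ) = 6*(q-1)+2 by ring,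
          show (6*q+0:ℤ) = 6*q by ring] at *
      rw [hs0 q, hs5 (q-1), hs4 (q-1), hs3 (q-1), hs2 (q-1)]
      rw [k2, k6, zero_mul]
      rw [show 3*(q-1)*(q-1+1) + (2*(q-1)+2) + (3*(q-1)*(q-1+1)) =
            3*(q-1)*(q-1+1) + (q-1+1) + (3*(q-1)*(q-1+1) + (q-1+1)) by ring]
      ring
    · -- r = 1
      rw [show (6*q+1-1:ℤ) = 6*q by ring, show (6*q+1-2:ℤ) = 6*(q-1)+5 by ring,
          show (6*q+1-3:ℤ) = 6*(q-1)+4 by ring, show (6*q+1-4:ℤ) = 6*(q-1)+3 by ring] at *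
      rw [hs1 q, hs0 q, hs5 (q-1), hs3 (q-1)]
      rw [kA, k6, zero_mul, zero_add]
      congr 1; ring
    · -- r = 2
      rw [show (6*q+2-1:ℤ) = 6*q+1 by ring, show (6*q+2-2:ℤ) = 6*q by ring,
          show (6*q+2-3:ℤ) = 6*(q-1)+5 by ring, show (6*q+2-4:ℤ) = 6*(q-1)+4 by ring] at *
      rw [hs2 q, hs1 q, hs0 q, hs5 (q-1), hs4 (q-1)]
      rw [kB, kB]
      rw [show (0:ℝ)^2 = 0 by norm_num, add_zero]
      congr 2; ring
    · -- r = 3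
      rw [show (6*q+3-1:ℤ) = 6*q+2 by ring, show (6*q+3-2:ℤ) = 6*q+1 by ring,
          show (6*q+3-3:ℤ) = 6*q by ring, show (6*q+3-4:ℤ) = 6*(q-1)+5 by ring] at *
      rw [hs3 q, hs2 q, hs1 q, hs0 q, hs5 (q-1)]
      rw [kC, k6, mul_zero, zero_add]
      congr 1; ring
    · -- r = 4
      rw [show (6*q+4-4:ℤ) = 6*q by ring, hs0 q] at hn
      exact absurd rfl hn
    · -- r = 5
      rw [show (6*q+5-1:ℤ) = 6*q+4 by ring, show (6*q+5-2:ℤ) = 6*q+3 by ring,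
          show (6*q+5-3:ℤ) = 6*q+2 by ring, show (6*q+5-4:ℤ) = 6*q+1 by ring] at *
      rw [hs5 q, hs1 q, hs4 q, hs3 q, hs2 q]
      rw [k1, k1, k8]
      rw [show 3*q*(q+1) + (2*q+2) + (3*q*(q+1) + -(2*q)) = 6*q*(q+1) + 2 by ring,
          show 3*q*(q+1) + (q+1) + (3*q*(q+1) + -q) = 6*q*(q+1) + 1 by ring,
          show 3*q*(q+1) + 3*q*(q+1) = 6*q*(q+1) by ring,
          zpow_add₀ hφ0, zpow_add₀ hφ0]
      rw [show ((2:ℤ)) = ((2:ℕ):ℤ) by norm_num, zpow_natCast, zpow_one, hφ2]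
      ring
end

section
/- Let w be a real root of w^4 − w − 1 = 0 and set x = −w^3 − 2w^2. Then the sequence s_n := U_{n−1}(w^{−3/2}/2) · w^{(n−1)(n+1)/2} (where U is the Chebyshev polynomial of the second kind) satisfies s_0 = 0, s_1 = 1, s_2 = 1, s_3 = −1, s_4 = x, and the Somos-4 relation s_n s_{n−4} = s_{n−1} s_{n−3} + s_{n−2}^2 for all n where s_{n−4} ≠ 0. -/
/-!
Write `w = r²` and `S_n(2t) = U_n(t)`, so that `s n = S_{n-1}(c) · r^{(n-1)(n+1)}` with `c = r⁻³`.
The identities `S_{k+1} S_{k-1} = S_k² - 1` and `S_{k+2} S_{k-2} = S_k² - X²`, together with the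
Gaussian weights contributing `r²` and `r⁸`, give
`s_n s_{n-4} = c² r⁶ s_{n-1} s_{n-3} + (1 - c²) r⁸ s_{n-2}²` for every `c` and `r`;
for `c = r⁻³` and `r⁸ = r² + 1` both coefficients equal `1`.
-/

open Polynomial Polynomial.Chebyshev

namespace Polynomial.Chebyshev

variable (R : Type*) [CommRing R]

theorem S_add_one_mul_S_sub_one (n : ℤ) : S R (n + 1) * S R (n - 1) = S R n ^ 2 - 1 := by
  linear_combination (norm := ring_nf) S R (n + 1) * S_sub_one R n - S_sq_add_S_sq R n

theorem S_add_two_mul_S_sub_two (n : ℤ) : S R (n + 2) * S R (n - 2) = S R n ^ 2 - X ^ 2 := by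
  linear_combination (norm := ring_nf) S R (n - 2) * S_add_two R n
    + (X * S R (n + 1) - S R n) * S_sub_two R n + X ^ 2 * S_add_one_mul_S_sub_one R n
    - X * S R n * S_add_one R n

theorem U_eval_eq_S_eval_two_mul (n : ℤ) (x : R) : (U R n).eval x = (S R n).eval (2 * x) := by
  rw [← S_comp_two_mul_X, eval_comp]
  simp

end Polynomial.Chebyshev

theorem zpow_mul_zpow_eq_sq_mul_pow {G₀ : Type*} [GroupWithZero G₀] {r : G₀} (hr : r ≠ 0)
    {a b e : ℤ} {d : ℕ} (h : a + b = 2 * e + d) : r ^ a * r ^ b = (r ^ e) ^ 2 * r ^ d := by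
  rw [← zpow_natCast, ← zpow_natCast, ← zpow_mul, ← zpow_add₀ hr, ← zpow_add₀ hr, h, mul_comm]
  rfl

theorem Real.sq_rpow_div_two {r : ℝ} (hr : 0 ≤ r) (k : ℤ) : (r ^ 2) ^ ((k : ℝ) / 2) = r ^ k := by
  rw [← Real.rpow_natCast_mul hr, ← Real.rpow_intCast]
  congr 1
  push_cast
  ring

section ChebyshevSomos

variable {K : Type*} [Field K] {c r : K} {s : ℤ → K}

theorem somos4_coeffs_of_S_eval_mul_zpow (hr : r ≠ 0)
    (hs : ∀ m, s m = (S K (m - 1)).eval c * r ^ ((m - 1) * (m + 1))) (n : ℤ) :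
    s n * s (n - 4) =
      c ^ 2 * r ^ 6 * (s (n - 1) * s (n - 3)) + (1 - c ^ 2) * r ^ 8 * s (n - 2) ^ 2 := by
  have hw4 : r ^ ((n - 1) * (n + 1)) * r ^ ((n - 4 - 1) * (n - 4 + 1))
      = (r ^ ((n - 2 - 1) * (n - 2 + 1))) ^ 2 * r ^ 8 :=
    zpow_mul_zpow_eq_sq_mul_pow hr (by push_cast; ring)
  have hw1 : r ^ ((n - 1 - 1) * (n - 1 + 1)) * r ^ ((n - 3 - 1) * (n - 3 + 1))
      = (r ^ ((n - 2 - 1) * (n - 2 + 1))) ^ 2 * r ^ 2 :=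
    zpow_mul_zpow_eq_sq_mul_pow hr (by push_cast; ring)
  have hS2 := congrArg (eval c) (S_add_two_mul_S_sub_two K (n - 3))
  have hS1 := congrArg (eval c) (S_add_one_mul_S_sub_one K (n - 3))
  simp only [eval_mul, eval_sub, eval_pow, eval_X, eval_one] at hS1 hS2
  rw [hs n, hs (n - 1), hs (n - 2), hs (n - 3), hs (n - 4)]
  set g := r ^ ((n - 2 - 1) * (n - 2 + 1))
  linear_combination (norm := ring_nf)
    (S K (n - 1)).eval c * (S K (n - 4 - 1)).eval c * hw4 + g ^ 2 * r ^ 8 * hS2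
    - c ^ 2 * r ^ 6 * (S K (n - 1 - 1)).eval c * (S K (n - 3 - 1)).eval c * hw1
    - c ^ 2 * g ^ 2 * r ^ 8 * hS1

theorem somos4_of_S_eval_mul_zpow (hr : r ≠ 0) (hc : c * r ^ 3 = 1) (hr8 : r ^ 8 = r ^ 2 + 1)
    (hs : ∀ m, s m = (S K (m - 1)).eval c * r ^ ((m - 1) * (m + 1))) (n : ℤ) :
    s n * s (n - 4) = s (n - 1) * s (n - 3) + s (n - 2) ^ 2 := by
  linear_combination somos4_coeffs_of_S_eval_mul_zpow hr hs n
    + (c * r ^ 3 + 1) * (s (n - 1) * s (n - 3)) * hc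
    + s (n - 2) ^ 2 * (hr8 - r ^ 2 * (c * r ^ 3 + 1) * hc)

theorem initial_values_of_S_eval_mul_zpow (hc : c * r ^ 3 = 1) (hr8 : r ^ 8 = r ^ 2 + 1)
    (hs : ∀ m, s m = (S K (m - 1)).eval c * r ^ ((m - 1) * (m + 1))) :
    s 0 = 0 ∧ s 1 = 1 ∧ s 2 = 1 ∧ s 3 = -1 ∧ s 4 = -r ^ 6 - 2 * r ^ 4 := by
  have hS3 : S K 3 = X ^ 3 - 2 * X := by
    rw [show (3 : ℤ) = 1 + 2 by norm_num, S_add_two, one_add_one_eq_two, S_two, S_one]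
    ring
  simp only [hs]
  norm_num [S_two, hS3]
  refine ⟨?_, ?_, ?_⟩
  · linear_combination hc
  · linear_combination (c * r ^ 3 + 1) * r ^ 2 * hc - hr8
  · linear_combination
      (r ^ 6 * (c ^ 2 * r ^ 6 + c * r ^ 3 + 1) - 2 * r ^ 12) * hc - 2 * r ^ 4 * hr8

end ChebyshevSomos

/-- For `w` the positive real root of `w⁴ = w + 1` and `x = -w³ - 2w²`, the sequence
`s n = U_{n-1}(w^{-3/2}/2) · w^{(n-1)(n+1)/2}` (Chebyshev `U` of the second kind)
has initial values `0, 1, 1, -1, x` and satisfies the Somos-4 relation wherever the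
divisor is nonzero. -/
theorem somos4oid_chebyshev_closed_form (w : ℝ) (hw : w ^ 4 = w + 1) (hw0 : 0 < w)
    (x : ℝ) (hx : x = -w ^ 3 - 2 * w ^ 2) (s : ℤ → ℝ)
    (hs : ∀ n : ℤ, s n = (Polynomial.Chebyshev.U ℝ (n - 1)).eval (w ^ (-(3 : ℝ) / 2) / 2)
      * w ^ ((((n : ℝ) - 1) * ((n : ℝ) + 1)) / 2)) :
    s 0 = 0 ∧ s 1 = 1 ∧ s 2 = 1 ∧ s 3 = -1 ∧ s 4 = x ∧
    (∀ n : ℤ, s (n - 4) ≠ 0 →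
      s n * s (n - 4) = s (n - 1) * s (n - 3) + s (n - 2) ^ 2) := by
  obtain ⟨r, hr, rfl⟩ : ∃ r : ℝ, 0 < r ∧ w = r ^ 2 :=
    ⟨√w, by positivity, (Real.sq_sqrt hw0.le).symm⟩
  set c := (r ^ 2) ^ (-(3 : ℝ) / 2) with hc_def
  have hc : c * r ^ 3 = 1 := by
    rw [hc_def, show -(3 : ℝ) / 2 = ((-3 : ℤ) : ℝ) / 2 by push_cast; ring,
      Real.sq_rpow_div_two hr.le]
    simp [hr.ne']
  have hs' (m : ℤ) : s m = (S ℝ (m - 1)).eval c * r ^ ((m - 1) * (m + 1)) := by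
    rw [hs, U_eval_eq_S_eval_two_mul, mul_div_cancel₀ _ two_ne_zero, ← Real.sq_rpow_div_two hr.le]
    push_cast
    rfl
  have hr8 : r ^ 8 = r ^ 2 + 1 := by linear_combination hw
  obtain ⟨h0, h1, h2, h3, h4⟩ := initial_values_of_S_eval_mul_zpow hc hr8 hs'
  exact ⟨h0, h1, h2, h3, by rw [h4, hx]; ring,
    fun n _ => somos4_of_S_eval_mul_zpow hr.ne' hc hr8 hs' n⟩
end

section
/- For the Somos-4 sequence a and the companion sequence A (Sloane A051138, A_0 = 0, A_1 = 1, A_2 = 1, A_3 = −1, A_{−n} = −A_n, A_n A_{n−4} = A_{n−1} A_{n−3} + A_{n−2}^2), the identity A_k^2 = a_k a_{k+3} − a_{k+1} a_{k+2} holds for all integers k. -/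
/-- Step for the gap-5 relation. -/
lemma somos_g5_step (x0 x1 x2 x3 x4 x5 x6 : ℤ) (h2 : x2 ≠ 0)
    (r0 : x0 * x4 = x1 * x3 + x2 ^ 2) (r2 : x2 * x6 = x3 * x5 + x4 ^ 2)
    (g : x0 * x5 + x1 * x4 = 5 * (x2 * x3)) :
    x1 * x6 + x2 * x5 = 5 * (x3 * x4) := by
  have key : x2 * (x1 * x6 + x2 * x5) = x2 * (5 * (x3 * x4)) := by
    linear_combination x4 * g + x1 * r2 - x5 * r0
  exact mul_left_cancel₀ h2 key

/-- Step for the gap-6 relation. -/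
lemma somos_g6_step (x0 x1 x2 x3 x4 x5 x6 x7 : ℤ) (h2 : x2 ≠ 0)
    (r0 : x0 * x4 = x1 * x3 + x2 ^ 2) (r1 : x1 * x5 = x2 * x4 + x3 ^ 2)
    (r2 : x2 * x6 = x3 * x5 + x4 ^ 2)
    (g50 : x0 * x5 + x1 * x4 = 5 * (x2 * x3))
    (g51 : x1 * x6 + x2 * x5 = 5 * (x3 * x4))
    (g52 : x2 * x7 + x3 * x6 = 5 * (x4 * x5))
    (g : x0 * x6 + 4 * (x2 * x4) = 5 * (x1 * x5)) :
    x1 * x7 + 4 * (x3 * x5) = 5 * (x2 * x6) := by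
  have key : x2 * (x1 * x7 + 4 * (x3 * x5)) = x2 * (5 * (x2 * x6)) := by
    linear_combination x1 * g - 5 * x2 * r2 + x1 * g52 + (5 * x4 + 5 * x1) * r1 +
      (-x3 - x0) * g51 - 5 * x3 * r0 + x2 * g50
  exact mul_left_cancel₀ h2 key

/-- Step for the cubic relation H. -/
lemma somos_h_step (x0 x1 x2 x3 x4 x5 : ℤ) (h0 : x0 ≠ 0)
    (r0 : x0 * x4 = x1 * x3 + x2 ^ 2)
    (g50 : x0 * x5 + x1 * x4 = 5 * (x2 * x3))
    (g : x0 * x3 ^ 2 + x1 ^ 2 * x4 + x2 ^ 3 = 4 * (x1 * x2 * x3)) :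
    x1 * x4 ^ 2 + x2 ^ 2 * x5 + x3 ^ 3 = 4 * (x2 * x3 * x4) := by
  have key : x0 * (x1 * x4 ^ 2 + x2 ^ 2 * x5 + x3 ^ 3) = x0 * (4 * (x2 * x3 * x4)) := by
    linear_combination x3 * g + (-4 * (x2 * x3) + x1 * x4) * r0 + x2 ^ 2 * g50
  exact mul_left_cancel₀ h0 key

/-- Step for the coprimality of consecutive terms. -/
lemma somos_cop_step (x0 x1 x2 x3 x4 : ℤ)
    (r : x0 * x4 = x1 * x3 + x2 ^ 2) (h : IsCoprime x2 x3) : IsCoprime x3 x4 := by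
  have h2 : IsCoprime (x2 ^ 2) x3 := h.pow_left
  obtain ⟨u, v, huv⟩ := h2
  exact ⟨v - u * x1, u * x0, by linear_combination huv + u * r⟩

/-- The main induction step, in abstract form. -/
lemma somos_main_step (x0 x1 x2 x3 x4 x5 x6 x7 : ℤ) (y0 y1 y2 y3 y4 : ℤ)
    (hy0 : y0 ≠ 0)
    (r0 : x0 * x4 = x1 * x3 + x2 ^ 2) (r1 : x1 * x5 = x2 * x4 + x3 ^ 2)
    (r2 : x2 * x6 = x3 * x5 + x4 ^ 2) (r3 : x3 * x7 = x4 * x6 + x5 ^ 2)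
    (g50 : x0 * x5 + x1 * x4 = 5 * (x2 * x3))
    (g51 : x1 * x6 + x2 * x5 = 5 * (x3 * x4))
    (g52 : x2 * x7 + x3 * x6 = 5 * (x4 * x5))
    (g60 : x0 * x6 + 4 * (x2 * x4) = 5 * (x1 * x5))
    (h1 : x1 * x4 ^ 2 + x2 ^ 2 * x5 + x3 ^ 3 = 4 * (x2 * x3 * x4))
    (arec : y0 * y4 = y1 * y3 + y2 ^ 2)
    (hT0 : y0 ^ 2 = x0 * x3 - x1 * x2)
    (hU0 : y0 * y1 = x1 * x3 - x2 ^ 2)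
    (hV0 : y0 * y2 = x1 * x4 - 2 * (x2 * x3))
    (hX0 : y0 * y3 = 3 * (x2 * x4) - 2 * (x1 * x5))
    (hV1 : y1 * y3 = x2 * x5 - 2 * (x3 * x4))
    (hT2 : y2 ^ 2 = x2 * x5 - x3 * x4) :
    y4 ^ 2 = x4 * x7 - x5 * x6 ∧ y3 * y4 = x4 * x6 - x5 ^ 2 ∧
      y2 * y4 = x3 * x6 - 2 * (x4 * x5) ∧ y1 * y4 = 3 * (x3 * x5) - 2 * (x2 * x6) := by
  have hy0sq : y0 ^ 2 ≠ 0 := pow_ne_zero 2 hy0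
  have estar : y0 * y4 = 2 * (x2 * x5) - 3 * (x3 * x4) := by
    linear_combination arec + hV1 + hT2
  refine ⟨?_, ?_, ?_, ?_⟩
  · refine mul_left_cancel₀ hy0sq ?_
    linear_combination (y0 * y4 + 2 * (x2 * x5) - 3 * (x3 * x4)) * estar
      + 3 * x5 * h1 + (2 * x4 ^ 2 - x3 * x5 - x2 * x6) * r1
      + (4 * x3 ^ 2 - 2 * (x2 * x4)) * r2 + x1 * x4 * g52 - 3 * (x3 * x4) * g51
      + x3 * x6 * g50 - x3 * x7 * r0 + (-x2 ^ 2 - x1 * x3) * r3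
      - (x4 * x7 - x5 * x6) * hT0
  · refine mul_left_cancel₀ hy0sq ?_
    linear_combination y0 * y4 * hX0 + (3 * (x2 * x4) - 2 * (x1 * x5)) * estar
      + x4 * h1 + (6 * (x3 * x4) - 5 * (x2 * x5)) * r1 + (-(x2 * x3) + x1 * x4) * r2
      + x3 * x5 * g50 - x3 * x6 * r0 - x3 ^ 2 * g51
      - (x4 * x6 - x5 ^ 2) * hT0
  · refine mul_left_cancel₀ hy0sq ?_
    linear_combination y0 * y4 * hV0 + (x1 * x4 - 2 * (x2 * x3)) * estar
      - 2 * x3 * h1 + x1 * x3 * r2 - 2 * x3 ^ 2 * r1 + 2 * (x3 * x5) * r0 - x3 ^ 2 * g60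
      - (x3 * x6 - 2 * (x4 * x5)) * hT0
  · refine mul_left_cancel₀ hy0sq ?_
    linear_combination y0 * y4 * hU0 + (x1 * x3 - x2 ^ 2) * estar
      - 2 * x2 * h1 + 3 * (x2 * x3) * r1 + (-2 * (x1 * x2) + 2 * (x0 * x3)) * r2
      - x3 ^ 2 * g50 + 2 * (x3 * x4) * r0
      - (3 * (x3 * x5) - 2 * (x2 * x6)) * hT0

/-- For the Somos-4 sequence `a` and the companion sequence `A` (Sloane A051138),
`A k ^ 2 = a k * a (k+3) - a (k+1) * a (k+2)` for all integers `k`. -/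
theorem somos4_companion_square (a A : ℤ → ℤ)
    (ha0 : a 0 = 1) (ha1 : a 1 = 1) (ha2 : a 2 = 1) (ha3 : a 3 = 1)
    (harec : ∀ n : ℤ, a n * a (n + 4) = a (n + 1) * a (n + 3) + a (n + 2) ^ 2)
    (hapal : ∀ n : ℤ, a n = a (3 - n))
    (hA0 : A 0 = 0) (hA1 : A 1 = 1) (hA2 : A 2 = 1) (hA3 : A 3 = -1) (hA4 : A 4 = -5)
    (hAodd : ∀ n : ℤ, A (-n) = -A n)
    (hArec : ∀ n : ℤ, A n ≠ 0 →
      A n * A (n + 4) = A (n + 1) * A (n + 3) + A (n + 2) ^ 2) :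
    ∀ k : ℤ, A k ^ 2 = a k * a (k + 3) - a (k + 1) * a (k + 2) := by
  -- small values of a
  have ha4 : a 4 = 2 := by have h := harec 0; norm_num [ha0, ha1, ha2, ha3] at h; linarith
  have ha5 : a 5 = 3 := by have h := harec 1; norm_num [ha1, ha2, ha3, ha4] at h; linarith
  have ha6 : a 6 = 7 := by have h := harec 2; norm_num [ha2, ha3, ha4, ha5] at h; linarith
  have ha7 : a 7 = 23 := by have h := harec 3; norm_num [ha3, ha4, ha5, ha6] at h; linarith
  have ha8 : a 8 = 59 := by have h := harec 4; norm_num [ha4, ha5, ha6, ha7] at h; omega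
  have ha9 : a 9 = 314 := by have h := harec 5; norm_num [ha5, ha6, ha7, ha8] at h; omega
  -- small values of A
  have hA5 : A 5 = -4 := by
    have h := hArec 1 (by rw [hA1]; norm_num)
    norm_num [hA1, hA2, hA3, hA4] at h; linarith
  have hA6 : A 6 = 29 := by
    have h := hArec 2 (by rw [hA2]; norm_num)
    norm_num [hA2, hA3, hA4, hA5] at h; linarith
  have apos : ∀ k : ℕ, 0 < a k := by
    intro k
    induction k using Nat.strong_induction_on with
    | _ k ih =>
      rcases k with _ | _ | _ | _ | m
      · norm_num [ha0]
      · norm_num [ha1]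
      · norm_num [ha2]
      · norm_num [ha3]
      · have p0 := ih m (by omega)
        have p1 := ih (m + 1) (by omega)
        have p3 := ih (m + 3) (by omega)
        push_cast at p1 p3 ⊢
        simp only [show ((m:ℤ)+1+1+1+1) = (m:ℤ)+4 from by ring]
        have h := harec (m : ℤ)
        by_contra hc
        push_neg at hc
        nlinarith [mul_pos p1 p3, sq_nonneg (a ((m : ℤ) + 2)), mul_nonpos_of_nonneg_of_nonpos (le_of_lt p0) hc]
  have amono : ∀ k : ℕ, a k ≤ a ((k : ℤ) + 1) := by
    intro k
    induction k using Nat.strong_induction_on with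
    | _ k ih =>
      rcases k with _ | _ | _ | m
      · norm_num [ha0, ha1]
      · norm_num [ha1, ha2]
      · norm_num [ha2, ha3]
      · have hm := ih m (by omega)
        have p0 := apos m
        have p2 := apos (m + 2)
        have p3 := apos (m + 3)
        push_cast at hm p2 p3 ⊢
        simp only [show ((m:ℤ)+1+1+1) = (m:ℤ)+3 from by ring,
          show ((m:ℤ)+1+1+1+1) = (m:ℤ)+4 from by ring,
          show ((m:ℤ)+3+1) = (m:ℤ)+4 from by ring]
        have h := harec (m : ℤ)
        have h1 : 1 ≤ a ((m : ℤ) + 2) := p2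
        nlinarith [mul_nonneg (sub_nonneg.mpr hm) (le_of_lt p3), h, p0]
  have age : ∀ k : ℕ, 2 ≤ a ((k : ℤ) + 4) := by
    intro k
    induction k with
    | zero => norm_num [ha4]
    | succ m ih =>
      have hmono := amono (m + 4)
      push_cast at hmono ⊢
      have e : ((m : ℤ) + 4) + 1 = (m : ℤ) + 1 + 4 := by ring
      rw [e] at hmono
      linarith
  have anz : ∀ k : ℕ, a ((k : ℤ) + 2) ≠ 0 := by
    intro k
    have := apos (k + 2)
    push_cast at this
    omega
  have cop : ∀ k : ℕ, IsCoprime (a ((k : ℤ) + 2)) (a ((k : ℤ) + 3)) := by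
    intro k
    induction k with
    | zero =>
      norm_num [ha2, ha3]
    | succ m ih =>
      push_cast
      simp only [show ((m:ℤ)+1+2) = (m:ℤ)+3 from by ring,
        show ((m:ℤ)+1+3) = (m:ℤ)+4 from by ring]
      exact somos_cop_step (a m) (a ((m:ℤ)+1)) (a ((m:ℤ)+2)) (a ((m:ℤ)+3)) (a ((m:ℤ)+4))
        (harec (m : ℤ)) ih
  have g5 : ∀ k : ℕ, a k * a ((k:ℤ) + 5) + a ((k:ℤ) + 1) * a ((k:ℤ) + 4)
      = 5 * (a ((k:ℤ) + 2) * a ((k:ℤ) + 3)) := by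
    intro k
    induction k with
    | zero => norm_num [ha0, ha1, ha2, ha3, ha4, ha5]
    | succ m ih =>
      push_cast
      simp only [show ((m:ℤ)+1+5) = (m:ℤ)+6 from by ring,
        show ((m:ℤ)+1+1) = (m:ℤ)+2 from by ring,
        show ((m:ℤ)+1+4) = (m:ℤ)+5 from by ring,
        show ((m:ℤ)+1+2) = (m:ℤ)+3 from by ring,
        show ((m:ℤ)+1+3) = (m:ℤ)+4 from by ring]
      have r2 : a ((m:ℤ)+2) * a ((m:ℤ)+6) = a ((m:ℤ)+3) * a ((m:ℤ)+5) + a ((m:ℤ)+4) ^ 2 := by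
        have h := harec ((m:ℤ)+2); simp only [add_assoc] at h; norm_num at h
        linear_combination h
      exact somos_g5_step (a m) (a ((m:ℤ)+1)) (a ((m:ℤ)+2)) (a ((m:ℤ)+3)) (a ((m:ℤ)+4))
        (a ((m:ℤ)+5)) (a ((m:ℤ)+6)) (anz m) (harec (m:ℤ)) r2 ih
  have g6 : ∀ k : ℕ, a k * a ((k:ℤ) + 6) + 4 * (a ((k:ℤ) + 2) * a ((k:ℤ) + 4))
      = 5 * (a ((k:ℤ) + 1) * a ((k:ℤ) + 5)) := by
    intro k
    induction k with
    | zero => norm_num [ha0, ha1, ha2, ha4, ha5, ha6]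
    | succ m ih =>
      push_cast
      simp only [show ((m:ℤ)+1+6) = (m:ℤ)+7 from by ring,
        show ((m:ℤ)+1+1) = (m:ℤ)+2 from by ring,
        show ((m:ℤ)+1+2) = (m:ℤ)+3 from by ring,
        show ((m:ℤ)+1+4) = (m:ℤ)+5 from by ring,
        show ((m:ℤ)+1+5) = (m:ℤ)+6 from by ring]
      have r1 : a ((m:ℤ)+1) * a ((m:ℤ)+5) = a ((m:ℤ)+2) * a ((m:ℤ)+4) + a ((m:ℤ)+3) ^ 2 := by
        have h := harec ((m:ℤ)+1); simp only [add_assoc] at h; norm_num at h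
        linear_combination h
      have r2 : a ((m:ℤ)+2) * a ((m:ℤ)+6) = a ((m:ℤ)+3) * a ((m:ℤ)+5) + a ((m:ℤ)+4) ^ 2 := by
        have h := harec ((m:ℤ)+2); simp only [add_assoc] at h; norm_num at h
        linear_combination h
      have g51 : a ((m:ℤ)+1) * a ((m:ℤ)+6) + a ((m:ℤ)+2) * a ((m:ℤ)+5)
          = 5 * (a ((m:ℤ)+3) * a ((m:ℤ)+4)) := by
        have h := g5 (m + 1); push_cast at h; simp only [add_assoc] at h; norm_num at h
        linear_combination h
      have g52 : a ((m:ℤ)+2) * a ((m:ℤ)+7) + a ((m:ℤ)+3) * a ((m:ℤ)+6)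
          = 5 * (a ((m:ℤ)+4) * a ((m:ℤ)+5)) := by
        have h := g5 (m + 2); push_cast at h; simp only [add_assoc] at h; norm_num at h
        linear_combination h
      exact somos_g6_step (a m) (a ((m:ℤ)+1)) (a ((m:ℤ)+2)) (a ((m:ℤ)+3)) (a ((m:ℤ)+4))
        (a ((m:ℤ)+5)) (a ((m:ℤ)+6)) (a ((m:ℤ)+7)) (anz m) (harec (m:ℤ)) r1 r2
        (g5 m) g51 g52 ih
  have hh : ∀ k : ℕ, a k * a ((k:ℤ) + 3) ^ 2 + a ((k:ℤ) + 1) ^ 2 * a ((k:ℤ) + 4)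
      + a ((k:ℤ) + 2) ^ 3 = 4 * (a ((k:ℤ) + 1) * a ((k:ℤ) + 2) * a ((k:ℤ) + 3)) := by
    intro k
    induction k with
    | zero => norm_num [ha0, ha1, ha2, ha3, ha4]
    | succ m ih =>
      push_cast
      simp only [show ((m:ℤ)+1+1) = (m:ℤ)+2 from by ring,
        show ((m:ℤ)+1+2) = (m:ℤ)+3 from by ring,
        show ((m:ℤ)+1+3) = (m:ℤ)+4 from by ring,
        show ((m:ℤ)+1+4) = (m:ℤ)+5 from by ring]
      have h0 : a (m:ℤ) ≠ 0 := by have := apos m; omega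
      exact somos_h_step (a m) (a ((m:ℤ)+1)) (a ((m:ℤ)+2)) (a ((m:ℤ)+3)) (a ((m:ℤ)+4))
        (a ((m:ℤ)+5)) h0 (harec (m:ℤ)) (g5 m) ih
  have St : ∀ k : ℕ,
      A ((k:ℤ)+3) ^ 2 = a ((k:ℤ)+3) * a ((k:ℤ)+6) - a ((k:ℤ)+4) * a ((k:ℤ)+5)
      ∧ A ((k:ℤ)+2) * A ((k:ℤ)+3) = a ((k:ℤ)+3) * a ((k:ℤ)+5) - a ((k:ℤ)+4) ^ 2
      ∧ A ((k:ℤ)+1) * A ((k:ℤ)+3) = a ((k:ℤ)+2) * a ((k:ℤ)+5) - 2 * (a ((k:ℤ)+3) * a ((k:ℤ)+4))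
      ∧ A (k:ℤ) * A ((k:ℤ)+3) = 3 * (a ((k:ℤ)+2) * a ((k:ℤ)+4)) - 2 * (a ((k:ℤ)+1) * a ((k:ℤ)+5))
      ∧ A ((k:ℤ)+3) ≠ 0 := by
    intro k
    induction k using Nat.strong_induction_on with
    | _ k ih =>
      rcases k with _ | _ | _ | _ | j
      · refine ⟨?_, ?_, ?_, ?_, ?_⟩ <;>
          norm_num [hA0, hA1, hA2, hA3, ha1, ha2, ha3, ha4, ha5, ha6]
      · refine ⟨?_, ?_, ?_, ?_, ?_⟩ <;>
          norm_num [hA1, hA2, hA3, hA4, ha2, ha3, ha4, ha5, ha6, ha7]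
      · refine ⟨?_, ?_, ?_, ?_, ?_⟩ <;>
          norm_num [hA2, hA3, hA4, hA5, ha3, ha4, ha5, ha6, ha7, ha8]
      · refine ⟨?_, ?_, ?_, ?_, ?_⟩ <;>
          norm_num [hA3, hA4, hA5, hA6, ha4, ha5, ha6, ha7, ha8, ha9]
      · -- inductive step, base n = j+3
        obtain ⟨tj, uj, vj, xj, nzj⟩ := ih j (by omega)
        obtain ⟨t1, u1, v1, x1, nz1⟩ := ih (j+1) (by omega)
        obtain ⟨t2, u2, v2, x2, nz2⟩ := ih (j+2) (by omega)
        obtain ⟨t3, u3, v3, x3, nz3⟩ := ih (j+3) (by omega)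
        push_cast at u1 v2 x3 v3 t2
        simp only [show ((j:ℤ)+1+2) = (j:ℤ)+3 from by ring,
          show ((j:ℤ)+1+3) = (j:ℤ)+4 from by ring,
          show ((j:ℤ)+1+4) = (j:ℤ)+5 from by ring,
          show ((j:ℤ)+1+5) = (j:ℤ)+6 from by ring,
          show ((j:ℤ)+2+1) = (j:ℤ)+3 from by ring,
          show ((j:ℤ)+2+2) = (j:ℤ)+4 from by ring,
          show ((j:ℤ)+2+3) = (j:ℤ)+5 from by ring,
          show ((j:ℤ)+2+4) = (j:ℤ)+6 from by ring,
          show ((j:ℤ)+2+5) = (j:ℤ)+7 from by ring,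
          show ((j:ℤ)+2+6) = (j:ℤ)+8 from by ring,
          show ((j:ℤ)+3+1) = (j:ℤ)+4 from by ring,
          show ((j:ℤ)+3+2) = (j:ℤ)+5 from by ring,
          show ((j:ℤ)+3+3) = (j:ℤ)+6 from by ring,
          show ((j:ℤ)+3+4) = (j:ℤ)+7 from by ring,
          show ((j:ℤ)+3+5) = (j:ℤ)+8 from by ring,
          show ((j:ℤ)+3+6) = (j:ℤ)+9 from by ring] at u1 v2 x3 v3 t2
        have r0 : a ((j:ℤ)+3) * a ((j:ℤ)+7) = a ((j:ℤ)+4) * a ((j:ℤ)+6) + a ((j:ℤ)+5) ^ 2 := by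
          have h := harec ((j:ℤ)+3); simp only [add_assoc] at h; norm_num at h
          linear_combination h
        have r1 : a ((j:ℤ)+4) * a ((j:ℤ)+8) = a ((j:ℤ)+5) * a ((j:ℤ)+7) + a ((j:ℤ)+6) ^ 2 := by
          have h := harec ((j:ℤ)+4); simp only [add_assoc] at h; norm_num at h
          linear_combination h
        have r2 : a ((j:ℤ)+5) * a ((j:ℤ)+9) = a ((j:ℤ)+6) * a ((j:ℤ)+8) + a ((j:ℤ)+7) ^ 2 := by
          have h := harec ((j:ℤ)+5); simp only [add_assoc] at h; norm_num at h
          linear_combination h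
        have r3 : a ((j:ℤ)+6) * a ((j:ℤ)+10) = a ((j:ℤ)+7) * a ((j:ℤ)+9) + a ((j:ℤ)+8) ^ 2 := by
          have h := harec ((j:ℤ)+6); simp only [add_assoc] at h; norm_num at h
          linear_combination h
        have g50 : a ((j:ℤ)+3) * a ((j:ℤ)+8) + a ((j:ℤ)+4) * a ((j:ℤ)+7)
            = 5 * (a ((j:ℤ)+5) * a ((j:ℤ)+6)) := by
          have h := g5 (j+3); push_cast at h; simp only [add_assoc] at h; norm_num at h
          linear_combination h
        have g51 : a ((j:ℤ)+4) * a ((j:ℤ)+9) + a ((j:ℤ)+5) * a ((j:ℤ)+8)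
            = 5 * (a ((j:ℤ)+6) * a ((j:ℤ)+7)) := by
          have h := g5 (j+4); push_cast at h; simp only [add_assoc] at h; norm_num at h
          linear_combination h
        have g52 : a ((j:ℤ)+5) * a ((j:ℤ)+10) + a ((j:ℤ)+6) * a ((j:ℤ)+9)
            = 5 * (a ((j:ℤ)+7) * a ((j:ℤ)+8)) := by
          have h := g5 (j+5); push_cast at h; simp only [add_assoc] at h; norm_num at h
          linear_combination h
        have g60 : a ((j:ℤ)+3) * a ((j:ℤ)+9) + 4 * (a ((j:ℤ)+5) * a ((j:ℤ)+7))
            = 5 * (a ((j:ℤ)+4) * a ((j:ℤ)+8)) := by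
          have h := g6 (j+3); push_cast at h; simp only [add_assoc] at h; norm_num at h
          linear_combination h
        have h1 : a ((j:ℤ)+4) * a ((j:ℤ)+7) ^ 2 + a ((j:ℤ)+5) ^ 2 * a ((j:ℤ)+8)
            + a ((j:ℤ)+6) ^ 3 = 4 * (a ((j:ℤ)+5) * a ((j:ℤ)+6) * a ((j:ℤ)+7)) := by
          have h := hh (j+4); push_cast at h; simp only [add_assoc] at h; norm_num at h
          linear_combination h
        have arec : A ((j:ℤ)+3) * A ((j:ℤ)+7)
            = A ((j:ℤ)+4) * A ((j:ℤ)+6) + A ((j:ℤ)+5) ^ 2 := by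
          have h := hArec ((j:ℤ)+3) nzj; simp only [add_assoc] at h; norm_num at h
          linear_combination h
        obtain ⟨c1, c2, c3, c4⟩ := somos_main_step (a ((j:ℤ)+3)) (a ((j:ℤ)+4)) (a ((j:ℤ)+5))
          (a ((j:ℤ)+6)) (a ((j:ℤ)+7)) (a ((j:ℤ)+8)) (a ((j:ℤ)+9)) (a ((j:ℤ)+10))
          (A ((j:ℤ)+3)) (A ((j:ℤ)+4)) (A ((j:ℤ)+5)) (A ((j:ℤ)+6)) (A ((j:ℤ)+7))
          nzj r0 r1 r2 r3 g50 g51 g52 g60 h1 arec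
          (by linear_combination tj) (by linear_combination u1) (by linear_combination v2)
          (by linear_combination x3) (by linear_combination v3) (by linear_combination t2)
        push_cast
        simp only [show ((j:ℤ)+1+1+1+1+3) = (j:ℤ)+7 from by ring,
          show ((j:ℤ)+1+1+1+1+6) = (j:ℤ)+10 from by ring,
          show ((j:ℤ)+1+1+1+1+4) = (j:ℤ)+8 from by ring,
          show ((j:ℤ)+1+1+1+1+5) = (j:ℤ)+9 from by ring,
          show ((j:ℤ)+1+1+1+1+2) = (j:ℤ)+6 from by ring,
          show ((j:ℤ)+1+1+1+1+1) = (j:ℤ)+5 from by ring,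
          show ((j:ℤ)+1+1+1+1:ℤ) = (j:ℤ)+4 from by ring,
          show ((j:ℤ)+4+1) = (j:ℤ)+5 from by ring,
          show ((j:ℤ)+4+2) = (j:ℤ)+6 from by ring,
          show ((j:ℤ)+4+3) = (j:ℤ)+7 from by ring,
          show ((j:ℤ)+4+4) = (j:ℤ)+8 from by ring,
          show ((j:ℤ)+4+5) = (j:ℤ)+9 from by ring,
          show ((j:ℤ)+4+6) = (j:ℤ)+10 from by ring]
        refine ⟨by linear_combination c1, by linear_combination c2, by linear_combination c3,
          by linear_combination c4, ?_⟩
        intro h0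
        have e : a ((j:ℤ)+8) ^ 2 = a ((j:ℤ)+7) * a ((j:ℤ)+9) := by
          rw [h0, mul_zero] at c2; linarith
        have copi : IsCoprime (a ((j:ℤ)+7)) (a ((j:ℤ)+8)) := by
          have h := cop (j+5); push_cast at h
          simp only [show ((j:ℤ)+5+2) = (j:ℤ)+7 from by ring,
            show ((j:ℤ)+5+3) = (j:ℤ)+8 from by ring] at h
          exact h
        have hdvd : a ((j:ℤ)+7) ∣ a ((j:ℤ)+8) ^ 2 := ⟨a ((j:ℤ)+9), e⟩
        have hunit : IsUnit (a ((j:ℤ)+7)) :=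
          (copi.pow_right (n := 2)).isUnit_of_dvd' dvd_rfl hdvd
        have hge : 2 ≤ a ((j:ℤ)+7) := by
          have h := age (j+3); push_cast at h
          simp only [show ((j:ℤ)+3+4) = (j:ℤ)+7 from by ring] at h
          exact h
        rcases Int.isUnit_iff.mp hunit with h | h <;> omega
  -- the identity for natural k
  have main : ∀ m : ℕ, A m ^ 2 = a m * a ((m:ℤ) + 3) - a ((m:ℤ) + 1) * a ((m:ℤ) + 2) := by
    intro m
    rcases m with _ | _ | _ | m
    · norm_num [hA0, ha0, ha1, ha2, ha3]
    · norm_num [hA1, ha1, ha2, ha3, ha4]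
    · norm_num [hA2, ha2, ha3, ha4, ha5]
    · have h := (St m).1
      push_cast
      simp only [show ((m:ℤ)+1+1+1) = (m:ℤ)+3 from by ring,
        show ((m:ℤ)+3+3) = (m:ℤ)+6 from by ring,
        show ((m:ℤ)+3+1) = (m:ℤ)+4 from by ring,
        show ((m:ℤ)+3+2) = (m:ℤ)+5 from by ring]
      linear_combination h
  intro k
  rcases le_or_gt 0 k with hk | hk
  · lift k to ℕ using hk with m
    exact main m
  · obtain ⟨m, hm⟩ : ∃ m : ℕ, (m : ℤ) = -k := ⟨(-k).toNat, Int.toNat_of_nonneg (by omega)⟩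
    have hk2 : k = -(m:ℤ) := by omega
    subst hk2
    have e1 : a (-(m:ℤ)) = a ((m:ℤ)+3) := by rw [hapal (-(m:ℤ))]; congr 1; ring
    have e2 : a (-(m:ℤ)+3) = a (m:ℤ) := by rw [hapal (-(m:ℤ)+3)]; congr 1; ring
    have e3 : a (-(m:ℤ)+1) = a ((m:ℤ)+2) := by rw [hapal (-(m:ℤ)+1)]; congr 1; ring
    have e4 : a (-(m:ℤ)+2) = a ((m:ℤ)+1) := by rw [hapal (-(m:ℤ)+2)]; congr 1; ring
    rw [e1, e2, e3, e4, hAodd (m:ℤ)]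
    linear_combination main m
end

section
/- Let s be Sloane's sequence A006769 defined by s_0 = 0, s_1 = 1, s_2 = 1, s_3 = −1, s_4 = 1, s_{−n} = −s_n, and s_n s_{n−4} = s_{n−1} s_{n−3} + s_{n−2}^2 for n ≥ 5. Then s_{2n+1} = (−1)^n a_{n+2} for all n ≥ 0, where a is the Somos-4 sequence. -/
lemma somos_window (a : ℕ → ℤ) (ha0 : a 0 = 1) (ha1 : a 1 = 1) (ha2 : a 2 = 1) (ha3 : a 3 = 1)
    (harec : ∀ n : ℕ, a n * a (n + 4) = a (n + 1) * a (n + 3) + a (n + 2) ^ 2) :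
    ∀ n : ℕ, (0 < a n ∧ 0 < a (n+1) ∧ 0 < a (n+2) ∧ 0 < a (n+3)) ∧
      (a n ≤ a (n+1) ∧ a (n+1) ≤ a (n+2) ∧ a (n+2) ≤ a (n+3)) := by
  intro n
  induction n with
  | zero => simp [ha0, ha1, ha2, ha3]
  | succ m ih =>
    obtain ⟨⟨h0, h1, h2, h3⟩, ⟨m01, m12, m23⟩⟩ := ih
    have hr := harec m
    have h4 : 0 < a (m+4) := by nlinarith [mul_pos h1 h3, mul_pos h2 h2]
    have m34 : a (m+3) ≤ a (m+4) := by nlinarith [mul_pos h2 h2, mul_nonneg (sub_nonneg.2 m01) h3.le]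
    exact ⟨⟨h1, h2, h3, h4⟩, ⟨m12, m23, m34⟩⟩

lemma somos_cop (a : ℕ → ℤ) (ha0 : a 0 = 1) (ha1 : a 1 = 1) (ha2 : a 2 = 1) (ha3 : a 3 = 1)
    (harec : ∀ n : ℕ, a n * a (n + 4) = a (n + 1) * a (n + 3) + a (n + 2) ^ 2) :
    ∀ n : ℕ, IsCoprime (a n) (a (n+1)) ∧ IsCoprime (a n) (a (n+2)) ∧ IsCoprime (a n) (a (n+3)) ∧
      IsCoprime (a (n+1)) (a (n+2)) ∧ IsCoprime (a (n+1)) (a (n+3)) ∧ IsCoprime (a (n+2)) (a (n+3)) := by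
  intro n
  induction n with
  | zero =>
    rw [ha0, ha1, ha2, ha3]
    exact ⟨isCoprime_one_left, isCoprime_one_left, isCoprime_one_left,
      isCoprime_one_left, isCoprime_one_left, isCoprime_one_left⟩
  | succ m ih =>
    obtain ⟨c01, c02, c03, c12, c13, c23⟩ := ih
    have c14 : IsCoprime (a (m+1)) (a (m+4)) := by
      have h1 : IsCoprime (a (m+1)) ((a (m+2))^2) := c12.pow_right
      have h2 := h1.add_mul_left_right (a (m+3))
      have h3 : (a (m+2))^2 + a (m+1) * a (m+3) = a m * a (m+4) := by linear_combination - harec m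
      rw [h3] at h2
      exact h2.of_mul_right_right
    have c24 : IsCoprime (a (m+2)) (a (m+4)) := by
      have h1 : IsCoprime (a (m+2)) (a (m+1) * a (m+3)) := (c12.symm).mul_right c23
      have h2 := h1.add_mul_left_right (a (m+2))
      have h3 : a (m+1) * a (m+3) + a (m+2) * a (m+2) = a m * a (m+4) := by linear_combination - harec m
      rw [h3] at h2
      exact h2.of_mul_right_right
    have c34 : IsCoprime (a (m+3)) (a (m+4)) := by
      have h1 : IsCoprime (a (m+3)) ((a (m+2))^2) := c23.symm.pow_right
      have h2 := h1.add_mul_left_right (a (m+1))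
      have h3 : (a (m+2))^2 + a (m+3) * a (m+1) = a m * a (m+4) := by linear_combination - harec m
      rw [h3] at h2
      exact h2.of_mul_right_right
    exact ⟨c12, c13, c14, c23, c24, c34⟩

lemma somos_F (a : ℕ → ℤ) (ha0 : a 0 = 1) (ha1 : a 1 = 1) (ha2 : a 2 = 1) (ha3 : a 3 = 1)
    (harec : ∀ n : ℕ, a n * a (n + 4) = a (n + 1) * a (n + 3) + a (n + 2) ^ 2)
    (hpos : ∀ n : ℕ, 0 < a n) :
    ∀ n : ℕ, a n ^ 2 * a (n+3) ^ 2 - 4 * a n * a (n+1) * a (n+2) * a (n+3)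
      + a (n+1) ^ 3 * a (n+3) + a n * a (n+2) ^ 3 + a (n+1) ^ 2 * a (n+2) ^ 2 = 0 := by
  intro n
  induction n with
  | zero => rw [ha0, ha1, ha2, ha3]; ring
  | succ m ih =>
    have h2 : a m ^ 2 * (a (m+1) ^ 2 * a (m+4) ^ 2 - 4 * a (m+1) * a (m+2) * a (m+3) * a (m+4)
        + a (m+2) ^ 3 * a (m+4) + a (m+1) * a (m+3) ^ 3 + a (m+2) ^ 2 * a (m+3) ^ 2) = 0 := by
      linear_combination (a (m+1) * a (m+3) + a (m+2)^2) * ih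
        + (a (m+1)^2 * a (m+2)^2 + a (m+1)^3 * a (m+3) + a m * a (m+2)^3
          - 4 * a m * a (m+1) * a (m+2) * a (m+3) + a m * a (m+1)^2 * a (m+4)) * harec m
    have hne : a m ^ 2 ≠ 0 := pow_ne_zero 2 (hpos m).ne'
    have := (mul_eq_zero.mp h2).resolve_left hne
    linarith [this]

/-- For Sloane's A006769 sequence `s` and the Somos-4 sequence `a`,
`s (2n+1) = (-1)^n * a (n+2)` for all `n ≥ 0`. -/
theorem A006769_odd_terms (s : ℤ → ℤ) (a : ℕ → ℤ)
    (hs0 : s 0 = 0) (hs1 : s 1 = 1) (hs2 : s 2 = 1) (hs3 : s 3 = -1) (hs4 : s 4 = 1)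
    (hsodd : ∀ n : ℤ, s (-n) = -s n)
    (hsrec : ∀ n : ℤ, s (n - 4) ≠ 0 →
      s n * s (n - 4) = s (n - 1) * s (n - 3) + s (n - 2) ^ 2)
    (ha0 : a 0 = 1) (ha1 : a 1 = 1) (ha2 : a 2 = 1) (ha3 : a 3 = 1)
    (harec : ∀ n : ℕ, a n * a (n + 4) = a (n + 1) * a (n + 3) + a (n + 2) ^ 2) :
    ∀ n : ℕ, s (2 * n + 1) = (-1) ^ n * a (n + 2) := by
  have window := somos_window a ha0 ha1 ha2 ha3 harec
  have apos : ∀ n, 0 < a n := fun n => (window n).1.1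
  have cop := somos_cop a ha0 ha1 ha2 ha3 harec
  have hF := somos_F a ha0 ha1 ha2 ha3 harec apos
  have amono : Monotone a := monotone_nat_of_le_succ (fun n => (window n).2.1)
  have a4 : a 4 = 2 := by have := harec 0; rw [ha0, ha1, ha2, ha3] at this; linarith
  have a5 : a 5 = 3 := by have := harec 1; rw [ha1, ha2, ha3, a4] at this; linarith
  have age2 : ∀ n : ℕ, 4 ≤ n → 2 ≤ a n := by
    intro n h; have := amono h; rw [a4] at this; linarith
  -- nonvanishing of q
  have hq : ∀ m : ℕ, 1 ≤ m → a m * a (m+3) - a (m+1) * a (m+2) ≠ 0 := by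
    intro m hm heq
    have hze : a (m+1) * a (m+2) = a (m+3) * a m := by linarith
    have hdvd : a (m+3) ∣ a (m+1) * a (m+2) := ⟨a m, hze⟩
    have c13 : IsCoprime (a (m+3)) (a (m+1)) := ((cop m).2.2.2.2.1).symm
    have hdvd2 : a (m+3) ∣ a (m+2) := c13.dvd_of_dvd_mul_left hdvd
    have c23 : IsCoprime (a (m+3)) (a (m+2)) := ((cop m).2.2.2.2.2).symm
    have hu : IsUnit (a (m+3)) := c23.isUnit_of_dvd' dvd_rfl hdvd2
    have h2 := age2 (m+3) (by omega)
    rcases Int.isUnit_iff.mp hu with h | h <;> omega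
  -- nonvanishing of p
  have hp : ∀ m : ℕ, 2 ≤ m → a m * a (m+2) - a (m+1) ^ 2 ≠ 0 := by
    intro m hm heq
    have hze : a (m+1) * a (m+1) = a (m+2) * a m := by nlinarith [heq]
    have hdvd : a (m+2) ∣ a (m+1) * a (m+1) := ⟨a m, hze⟩
    have c12 : IsCoprime (a (m+2)) (a (m+1)) := ((cop m).2.2.2.1).symm
    have hdvd2 : a (m+2) ∣ a (m+1) := c12.dvd_of_dvd_mul_left hdvd
    have hu : IsUnit (a (m+2)) := c12.isUnit_of_dvd' dvd_rfl hdvd2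
    have h2 := age2 (m+2) (by omega)
    rcases Int.isUnit_iff.mp hu with h | h <;> omega
  -- initial s values
  have s5 : s 5 = 2 := by
    have t := hsrec 5 (by norm_num [hs1])
    norm_num [hs1, hs2, hs3, hs4] at t
    linarith
  -- main induction
  have main : ∀ k : ℕ,
      s (2*(k:ℤ)+3) = (-1)^(k+1) * a (k+3) ∧
      s (2*(k:ℤ)+5) = (-1)^k * a (k+4) ∧
      s (2*(k:ℤ)+4) * s (2*(k:ℤ)+2) = a (k+2) * a (k+4) - a (k+3)^2 ∧
      s (2*(k:ℤ)+4)^2 = a (k+2) * a (k+5) - a (k+3) * a (k+4) ∧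
      s (2*(k:ℤ)+2)^2 = a (k+1) * a (k+4) - a (k+2) * a (k+3) := by
    intro k
    induction k with
    | zero =>
      norm_num [hs2, hs3, hs4, s5, ha1, ha2, ha3, a4, a5]
    | succ k ih =>
      obtain ⟨h1, h2, h3, h4, h5⟩ := ih
      set K : ℤ := (k : ℤ) with hK
      have hsq : (((-1:ℤ))^k) ^ 2 = 1 := by
        rw [← pow_mul, mul_comm, pow_mul]; norm_num
      -- s(2K+2) ≠ 0
      have hzsq : s (2*K+2)^2 ≠ 0 := by rw [h5]; exact hq (k+1) (by omega)
      have hz2 : s (2*K+2) ≠ 0 := fun h => hzsq (by rw [h]; ring)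
      -- even recurrence at 2K+6
      have e1 := hsrec (2*K+6) (by rw [show (2*K+6)-4 = 2*K+2 by ring]; exact hz2)
      rw [show (2*K+6)-4 = 2*K+2 by ring, show (2*K+6)-1 = 2*K+5 by ring,
        show (2*K+6)-3 = 2*K+3 by ring, show (2*K+6)-2 = 2*K+4 by ring] at e1
      rw [h1, h2, h4] at e1
      have e1' : s (2*K+6) * s (2*K+2) = a (k+2) * a (k+5) - 2 * (a (k+3) * a (k+4)) := by
        rw [e1]; linear_combination (-(a (k+3) * a (k+4))) * hsq
      -- P_new
      have t : (s (2*K+6) * s (2*K+4)) * (a (k+2) * a (k+4) - a (k+3)^2)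
          = (a (k+2) * a (k+5) - 2 * (a (k+3) * a (k+4))) * (a (k+2) * a (k+5) - a (k+3) * a (k+4)) := by
        rw [← h3, ← h4, ← e1']; ring
      have t2 : (a (k+2) * a (k+5) - 2 * (a (k+3) * a (k+4))) * (a (k+2) * a (k+5) - a (k+3) * a (k+4))
          = (a (k+3) * a (k+5) - a (k+4)^2) * (a (k+2) * a (k+4) - a (k+3)^2) := by
        linear_combination hF (k+2)
      have e2 : s (2*K+6) * s (2*K+4) = a (k+3) * a (k+5) - a (k+4)^2 :=
        mul_right_cancel₀ (hp (k+2) (by omega)) (t.trans t2)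
      -- Q_new
      have hqne : a (k+2) * a (k+5) - a (k+3) * a (k+4) ≠ 0 := hq (k+2) (by omega)
      have u : (s (2*K+6)^2 * (a (k+2) * a (k+5) - a (k+3) * a (k+4))) * a (k+2)
          = ((a (k+3) * a (k+6) - a (k+4) * a (k+5)) * (a (k+2) * a (k+5) - a (k+3) * a (k+4))) * a (k+2) := by
        have v : a (k+2) * ((a (k+3) * a (k+5) - a (k+4)^2)^2)
            = a (k+2) * ((a (k+3) * a (k+6) - a (k+4) * a (k+5)) * (a (k+2) * a (k+5) - a (k+3) * a (k+4))) := by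
          linear_combination (a (k+4)) * hF (k+2)
            + (a (k+3)^2 * a (k+4) - a (k+2) * a (k+3) * a (k+5)) * harec (k+2)
        have u0 : s (2*K+6)^2 * (s (2*K+4)^2) = (s (2*K+6) * s (2*K+4))^2 := by ring
        rw [h4, e2] at u0
        linear_combination a (k+2) * u0 + v
      have e3 : s (2*K+6)^2 = a (k+3) * a (k+6) - a (k+4) * a (k+5) := by
        have := mul_right_cancel₀ (apos (k+2)).ne' u
        exact mul_right_cancel₀ hqne this
      -- odd step at 2K+7
      have hz3 : s (2*K+3) ≠ 0 := by
        rw [h1]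
        exact mul_ne_zero (pow_ne_zero _ (by norm_num)) (apos (k+3)).ne'
      have e4 := hsrec (2*K+7) (by rw [show (2*K+7)-4 = 2*K+3 by ring]; exact hz3)
      rw [show (2*K+7)-4 = 2*K+3 by ring, show (2*K+7)-1 = 2*K+6 by ring,
        show (2*K+7)-3 = 2*K+4 by ring, show (2*K+7)-2 = 2*K+5 by ring] at e4
      rw [h2] at e4
      rw [show s (2*K+6) * s (2*K+4) + ((-1:ℤ)^k * a (k+4))^2
          = s (2*K+6) * s (2*K+4) + ((-1:ℤ)^k)^2 * a (k+4)^2 by ring] at e4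
      rw [hsq, e2] at e4
      have t3 : s (2*K+7) * s (2*K+3) = ((-1)^(k+1) * a (k+5)) * s (2*K+3) := by
        rw [e4, h1]; linear_combination (-(a (k+3) * a (k+5))) * hsq
      have h2' : s (2*K+7) = (-1)^(k+1) * a (k+5) := mul_right_cancel₀ hz3 t3
      -- assemble
      have hcast : ((k+1 : ℕ) : ℤ) = K + 1 := by push_cast; ring
      refine ⟨?_, ?_, ?_, ?_, ?_⟩
      · rw [hcast, show 2*(K+1)+3 = 2*K+5 by ring, h2]; ring
      · rw [hcast, show 2*(K+1)+5 = 2*K+7 by ring, h2']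
      · rw [hcast, show 2*(K+1)+4 = 2*K+6 by ring, show 2*(K+1)+2 = 2*K+4 by ring]; exact e2
      · rw [hcast, show 2*(K+1)+4 = 2*K+6 by ring]; exact e3
      · rw [hcast, show 2*(K+1)+2 = 2*K+4 by ring]; exact h4
  -- conclude
  intro n
  match n with
  | 0 => norm_num [hs1, ha2]
  | (k+1) =>
    have h := (main k).1
    rw [show (2 * ((k+1:ℕ):ℤ) + 1) = 2*(k:ℤ)+3 by push_cast; ring]
    exact h
end

section
/- The Somos-8 sequence is not integral: with e_0 = ... = e_7 = 1 and e_n e_{n−8} = e_{n−1} e_{n−7} + e_{n−2} e_{n−6} + e_{n−3} e_{n−5} + e_{n−4}^2, the term e_{17} equals 420514/7, which is not an integer. -/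
/-- The Somos-8 sequence is not integral: `e 17 = 420514 / 7`, not an integer. -/
theorem somos8_not_integral (e : ℕ → ℚ)
    (hinit : ∀ i, i ≤ 7 → e i = 1)
    (hrec : ∀ n, e (n + 8) = (e (n + 7) * e (n + 1) + e (n + 6) * e (n + 2)
      + e (n + 5) * e (n + 3) + e (n + 4) ^ 2) / e n) :
    e 17 = 420514 / 7 ∧ ¬∃ k : ℤ, e 17 = (k : ℚ) := by
  have h0 := hinit 0 (by norm_num)
  have h1 := hinit 1 (by norm_num)
  have h2 := hinit 2 (by norm_num)
  have h3 := hinit 3 (by norm_num)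
  have h4 := hinit 4 (by norm_num)
  have h5 := hinit 5 (by norm_num)
  have h6 := hinit 6 (by norm_num)
  have h7 := hinit 7 (by norm_num)
  have h8 : e 8 = 4 := by have := hrec 0; norm_num [h0,h1,h2,h3,h4,h5,h6,h7] at this; exact this
  have h9 : e 9 = 7 := by have := hrec 1; norm_num [h1,h2,h3,h4,h5,h6,h7,h8] at this; exact this
  have h10 : e 10 = 13 := by have := hrec 2; norm_num [h2,h3,h4,h5,h6,h7,h8,h9] at this; exact this
  have h11 : e 11 = 25 := by have := hrec 3; norm_num [h3,h4,h5,h6,h7,h8,h9,h10] at this; exact this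
  have h12 : e 12 = 61 := by have := hrec 4; norm_num [h4,h5,h6,h7,h8,h9,h10,h11] at this; exact this
  have h13 : e 13 = 187 := by have := hrec 5; norm_num [h5,h6,h7,h8,h9,h10,h11,h12] at this; exact this
  have h14 : e 14 = 775 := by have := hrec 6; norm_num [h6,h7,h8,h9,h10,h11,h12,h13] at this; exact this
  have h15 : e 15 = 5827 := by have := hrec 7; norm_num [h7,h8,h9,h10,h11,h12,h13,h14] at this; exact this
  have h16 : e 16 = 14815 := by have := hrec 8; norm_num [h8,h9,h10,h11,h12,h13,h14,h15] at this; exact this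
  have h17 : e 17 = 420514 / 7 := by
    have := hrec 9; norm_num [h9,h10,h11,h12,h13,h14,h15,h16] at this; exact this
  refine ⟨h17, ?_⟩
  rintro ⟨k, hk⟩
  rw [h17] at hk
  have : (420514 : ℤ) = 7 * k := by
    have : (420514 : ℚ) = 7 * k := by field_simp at hk; linarith
    exact_mod_cast this
  omega
end
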